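/- arXiv:2110.00115 — 9 statements merged into one kernel-verified Lean document; each statement's English description precedes it below -/
import Mathlib

section
/- If the scoring rule S has a linear equivalent, then for every t ≥ 1 the empirical pointwise score differential is conditionally unbiased: E[δ̂_t | 𝒢_{t−1}] = δ_t almost surely; equivalently, (δ̂_t − δ_t)_{t≥1} is a martingale difference sequence with respect to (𝒢_t). -/
open MeasureTheory Set

/-- A scoring rule `S` on `[0,1] × [0,1]` *has a linear equivalent* if there is a bounded
measurable `S̃ : [0,1] × [0,1] → ℝ` which is affine in its second argument and such that
`S(p, r) - S̃(p, r)` does not depend on `p`. -/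
def HasLinearEquivalent (S : ℝ → ℝ → ℝ) : Prop :=
  ∃ St : ℝ → ℝ → ℝ,
    Measurable (Function.uncurry St) ∧
    (∃ C : ℝ, ∀ p ∈ Icc (0:ℝ) 1, ∀ r ∈ Icc (0:ℝ) 1, |St p r| ≤ C) ∧
    (∀ p ∈ Icc (0:ℝ) 1, ∃ a b : ℝ, ∀ r ∈ Icc (0:ℝ) 1, St p r = a + b * r) ∧
    (∀ p ∈ Icc (0:ℝ) 1, ∀ p' ∈ Icc (0:ℝ) 1, ∀ r ∈ Icc (0:ℝ) 1,
      S p r - St p r = S p' r - St p' r)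

/-!
Subtracting the linear equivalent `S̃` leaves a function of the outcome alone, which cancels in
the differential; since `S̃(p, ·)` is affine, `S(p, x) - S(q, x) = D₀ + (D₁ - D₀) x` on `[0,1]`
with `D_c = S̃(p, c) - S̃(q, c)`. For predictable `p, q` the `D_c` are `𝒢_{t-1}`-measurable and
bounded, so they pull out of the conditional expectation and `E[y_t | 𝒢_{t-1}] = r_t` does the rest.
-/

lemma eq_add_sub_mul_of_affineOn_Icc {f : ℝ → ℝ}
    (hf : ∃ a b : ℝ, ∀ r ∈ Icc (0:ℝ) 1, f r = a + b * r) {x : ℝ} (hx : x ∈ Icc (0:ℝ) 1) :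
    f x = f 0 + (f 1 - f 0) * x := by
  obtain ⟨a, b, hab⟩ := hf
  rw [hab 0 (by norm_num), hab 1 (by norm_num), hab x hx]
  ring

lemma sub_eq_add_mul_of_linearEquivalent {S St : ℝ → ℝ → ℝ}
    (haff : ∀ p ∈ Icc (0:ℝ) 1, ∃ a b : ℝ, ∀ r ∈ Icc (0:ℝ) 1, St p r = a + b * r)
    (hdiff : ∀ p ∈ Icc (0:ℝ) 1, ∀ p' ∈ Icc (0:ℝ) 1, ∀ r ∈ Icc (0:ℝ) 1,
      S p r - St p r = S p' r - St p' r)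
    {p q x : ℝ} (hp : p ∈ Icc (0:ℝ) 1) (hq : q ∈ Icc (0:ℝ) 1) (hx : x ∈ Icc (0:ℝ) 1) :
    S p x - S q x = (St p 0 - St q 0) + ((St p 1 - St q 1) - (St p 0 - St q 0)) * x := by
  linear_combination hdiff p hp q hq x hx + eq_add_sub_mul_of_affineOn_Icc (haff p hp) hx
    - eq_add_sub_mul_of_affineOn_Icc (haff q hq) hx

lemma condExp_add_mul_ae_eq {Ω : Type*} {m m0 : MeasurableSpace Ω} {P : Measure Ω}
    (hm : m ≤ m0) [SigmaFinite (P.trim hm)] {A B Y R : Ω → ℝ}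
    (hA : StronglyMeasurable[m] A) (hB : StronglyMeasurable[m] B)
    (hAi : Integrable A P) (hBY : Integrable (B * Y) P) (hY : Integrable Y P)
    (hYR : P[Y | m] =ᵐ[P] R) :
    P[A + B * Y | m] =ᵐ[P] A + B * R := by
  have hBY_cond : P[B * Y | m] =ᵐ[P] B * R := by
    filter_upwards [condExp_mul_of_stronglyMeasurable_left hB hBY hY, hYR] with ω h1 h2
    simp only [h1, Pi.mul_apply, h2]
  filter_upwards [condExp_add hAi hBY m, hBY_cond] with ω h1 h2
  simp only [h1, Pi.add_apply, condExp_of_stronglyMeasurable hm hA hAi, h2]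

lemma integrable_comp_of_abs_le {Ω : Type*} {m0 : MeasurableSpace Ω} {P : Measure Ω}
    [IsFiniteMeasure P] {g : ℝ → ℝ} {s : Set ℝ} {C : ℝ} (hg : Measurable g)
    (hgC : ∀ u ∈ s, |g u| ≤ C) {f : Ω → ℝ} (hf : Measurable f) (hfs : ∀ ω, f ω ∈ s) :
    Integrable (fun ω => g (f ω)) P :=
  .of_mem_Icc (-C) C (hg.comp hf).aemeasurable (ae_of_all _ fun ω => abs_le.mp (hgC _ (hfs ω)))

theorem score_differential_conditionally_unbiased_general
    {Ω : Type*} {m0 : MeasurableSpace Ω} {P : Measure Ω} [IsProbabilityMeasure P]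
    (𝒢 : Filtration ℕ m0)
    (S : ℝ → ℝ → ℝ)
    (hlin : HasLinearEquivalent S)
    (p q r y : ℕ → Ω → ℝ)
    (hp_pred : ∀ t : ℕ, 1 ≤ t → Measurable[𝒢 (t - 1)] (p t))
    (hq_pred : ∀ t : ℕ, 1 ≤ t → Measurable[𝒢 (t - 1)] (q t))
    (hp_mem : ∀ t ω, p t ω ∈ Icc (0:ℝ) 1)
    (hq_mem : ∀ t ω, q t ω ∈ Icc (0:ℝ) 1)
    (hr_mem : ∀ t ω, r t ω ∈ Icc (0:ℝ) 1)
    (hy_adapted : ∀ t : ℕ, 1 ≤ t → Measurable[𝒢 t] (y t))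
    (hy_mem : ∀ t ω, y t ω = 0 ∨ y t ω = 1)
    (hy_cond : ∀ t : ℕ, 1 ≤ t → P[y t | 𝒢 (t - 1)] =ᵐ[P] r t) :
    ∀ t : ℕ, 1 ≤ t →
      P[(fun ω => S (p t ω) (y t ω) - S (q t ω) (y t ω)) | 𝒢 (t - 1)]
        =ᵐ[P] (fun ω => S (p t ω) (r t ω) - S (q t ω) (r t ω)) := by
  obtain ⟨St, hSt_meas, ⟨C, hSt_bdd⟩, hSt_aff, hSt_diff⟩ := hlin
  intro t ht
  have hle := 𝒢.le (t - 1)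
  set D : ℝ → Ω → ℝ := fun c ω => St (p t ω) c - St (q t ω) c
  have hD_meas (c : ℝ) : StronglyMeasurable[𝒢 (t - 1)] (D c) := by
    have := hp_pred t ht
    have := hq_pred t ht
    fun_prop
  have hD_int (c : ℝ) (hc : c ∈ Icc (0:ℝ) 1) : Integrable (D c) P := by
    have hSt_bdd_c (u : ℝ) (hu : u ∈ Icc (0:ℝ) 1) := hSt_bdd u hu c hc
    exact (integrable_comp_of_abs_le hSt_meas.of_uncurry_right hSt_bdd_c
      ((hp_pred t ht).mono hle le_rfl) (hp_mem t)).sub (integrable_comp_of_abs_le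
        hSt_meas.of_uncurry_right hSt_bdd_c ((hq_pred t ht).mono hle le_rfl) (hq_mem t))
  have hy01 (ω : Ω) : y t ω ∈ Icc (0:ℝ) 1 := by rcases hy_mem t ω with h | h <;> simp [h]
  have hy_meas : Measurable (y t) := (hy_adapted t ht).mono (𝒢.le t) le_rfl
  have hy_int : Integrable (y t) P := .of_mem_Icc 0 1 hy_meas.aemeasurable (ae_of_all _ hy01)
  have hy_bdd : ∀ᵐ ω ∂P, ‖y t ω‖ ≤ 1 :=
    ae_of_all _ fun ω => abs_le.mpr ⟨by linarith [(hy01 ω).1], (hy01 ω).2⟩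
  have hdiff (x : Ω → ℝ) (hx : ∀ ω, x ω ∈ Icc (0:ℝ) 1) :
      (fun ω => S (p t ω) (x ω) - S (q t ω) (x ω)) = D 0 + (D 1 - D 0) * x := by
    funext ω
    exact sub_eq_add_mul_of_linearEquivalent hSt_aff hSt_diff (hp_mem t ω) (hq_mem t ω) (hx ω)
  have h0 : (0:ℝ) ∈ Icc (0:ℝ) 1 := left_mem_Icc.mpr zero_le_one
  have h1 : (1:ℝ) ∈ Icc (0:ℝ) 1 := right_mem_Icc.mpr zero_le_one
  rw [hdiff (y t) hy01, hdiff (r t) (hr_mem t)]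
  exact condExp_add_mul_ae_eq hle (hD_meas 0) ((hD_meas 1).sub (hD_meas 0)) (hD_int 0 h0)
    (((hD_int 1 h1).sub (hD_int 0 h0)).mul_bdd hy_meas.aestronglyMeasurable hy_bdd) hy_int
    (hy_cond t ht)

/-- **Lemma 1 (Lai, Gross and Shen; score differentials form an MDS).**
If the scoring rule `S` has a linear equivalent, then for every `t ≥ 1` the empirical
pointwise score differential `δ̂_t = S(p_t, y_t) - S(q_t, y_t)` is conditionally unbiased for
`δ_t = S(p_t, r_t) - S(q_t, r_t)`: `E[δ̂_t | 𝒢_{t-1}] = δ_t` almost surely. -/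
theorem score_differential_conditionally_unbiased
    {Ω : Type*} {m0 : MeasurableSpace Ω} {P : Measure Ω} [IsProbabilityMeasure P]
    (𝒢 : Filtration ℕ m0)
    (S : ℝ → ℝ → ℝ)
    (hSmeas : Measurable (Function.uncurry S))
    (hSbdd : ∃ C : ℝ, ∀ p ∈ Icc (0:ℝ) 1, ∀ r ∈ Icc (0:ℝ) 1, |S p r| ≤ C)
    (hlin : HasLinearEquivalent S)
    (p q r y : ℕ → Ω → ℝ)
    (hp_pred : ∀ t : ℕ, 1 ≤ t → Measurable[𝒢 (t - 1)] (p t))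
    (hq_pred : ∀ t : ℕ, 1 ≤ t → Measurable[𝒢 (t - 1)] (q t))
    (hr_pred : ∀ t : ℕ, 1 ≤ t → Measurable[𝒢 (t - 1)] (r t))
    (hp_mem : ∀ t ω, p t ω ∈ Icc (0:ℝ) 1)
    (hq_mem : ∀ t ω, q t ω ∈ Icc (0:ℝ) 1)
    (hr_mem : ∀ t ω, r t ω ∈ Icc (0:ℝ) 1)
    (hy_adapted : ∀ t : ℕ, 1 ≤ t → Measurable[𝒢 t] (y t))
    (hy_mem : ∀ t ω, y t ω = 0 ∨ y t ω = 1)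
    (hy_cond : ∀ t : ℕ, 1 ≤ t → P[y t | 𝒢 (t - 1)] =ᵐ[P] r t) :
    ∀ t : ℕ, 1 ≤ t →
      P[(fun ω => S (p t ω) (y t ω) - S (q t ω) (y t ω)) | 𝒢 (t - 1)]
        =ᵐ[P] (fun ω => S (p t ω) (r t ω) - S (q t ω) (r t ω)) :=
  score_differential_conditionally_unbiased_general 𝒢 S hlin p q r y hp_pred hq_pred hp_mem hq_mem
    hr_mem hy_adapted hy_mem hy_cond
end

section
/- (Theorem 1, Hoeffding-style confidence sequence.) Suppose E[δ̂_t | 𝒢_{t−1}] = δ_t and |δ̂_t| ≤ 1 a.s. for every t ≥ 1, and let α ∈ (0,1). If u is a sub-Gaussian uniform boundary with crossing probability α/2, then P( for all t ≥ 1, |Δ̂_t − Δ_t| < u(t)/t ) ≥ 1 − α; i.e., the intervals (Δ̂_t − u(t)/t, Δ̂_t + u(t)/t) form a (1−α)-level confidence sequence for Δ_t. -/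
/-!
Write `S_t = ∑_{i ≤ t} (δ̂_i - δ_i)`. Given `𝒢_{t-1}`, the increment `δ̂_t` lies in `[-1, 1]` and
has mean `δ_t`, so convexity of `exp` (`exp (λx) ≤ cosh λ + x sinh λ`) together with the two-point
case of Hoeffding's lemma (`cosh λ + m sinh λ ≤ exp (λm + λ²/2)` for `|m| ≤ 1`) gives
`E[exp (λ (δ̂_t - δ_t)) | 𝒢_{t-1}] ≤ exp (λ²/2)`. Hence `exp (λ S_t - λ² t / 2)` is a
supermartingale for every `λ`, and the boundary `u` applies to `S` and to `-S` with variance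
process `V_t = t`: each of them ever reaches `u(t)` with probability at most `α/2`. Outside these
two events `|S_t| < u(t)` for all `t ≥ 1`, which is the claim after division by `t`.
-/

open MeasureTheory Set

/-- `u : [0,∞) → ℝ` is a *sub-Gaussian uniform boundary with crossing probability `α`* if for
every filtered probability space and every pair of adapted real processes `(S_t, V_t)_{t≥0}`
with `S_0 = V_0 = 0` and `V_t ≥ 0`, such that for every `λ ≥ 0` there exists a nonnegative
supermartingale `(L_t(λ))_{t≥0}` with `E[L_0(λ)] ≤ 1` and
`exp(λ S_t − (λ²/2) V_t) ≤ L_t(λ)` a.s. for all `t`, one has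
`P(∃ t ≥ 1 : S_t ≥ u(V_t)) ≤ α`. -/
def IsSubGaussianUniformBoundary (u : ℝ → ℝ) (α : ℝ) : Prop :=
  ∀ (Ω : Type) (m0 : MeasurableSpace Ω) (P : Measure Ω), IsProbabilityMeasure P →
    ∀ (𝒢 : Filtration ℕ m0) (S V : ℕ → Ω → ℝ),
      Adapted 𝒢 S → Adapted 𝒢 V →
      (∀ ω, S 0 ω = 0) → (∀ ω, V 0 ω = 0) → (∀ t ω, 0 ≤ V t ω) →
      (∀ l : ℝ, 0 ≤ l →
        ∃ L : ℕ → Ω → ℝ,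
          Supermartingale L 𝒢 P ∧ (∀ t ω, 0 ≤ L t ω) ∧ (∫ ω, L 0 ω ∂P) ≤ 1 ∧
          ∀ t : ℕ, ∀ᵐ ω ∂P, Real.exp (l * S t ω - l ^ 2 / 2 * V t ω) ≤ L t ω) →
      P {ω | ∃ t : ℕ, 1 ≤ t ∧ u (V t ω) ≤ S t ω} ≤ ENNReal.ofReal α

open ProbabilityTheory Real

namespace Real

lemma cosh_add_mul_sinh_le_exp {t : ℝ} (ht : |t| ≤ 1) (x : ℝ) :
    cosh x + t * sinh x ≤ exp (t * x + x ^ 2 / 2) := by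
  obtain ⟨ht₁, ht₂⟩ := abs_le.1 ht
  have hp : 0 ≤ (1 + t) / 2 := by linarith
  have hq : 0 ≤ (1 - t) / 2 := by linarith
  let μ : Measure Bool := ENNReal.ofReal ((1 + t) / 2) • Measure.dirac true
    + ENNReal.ofReal ((1 - t) / 2) • Measure.dirac false
  have : IsProbabilityMeasure μ := ⟨by
    simp only [μ, Measure.add_apply, Measure.smul_apply, measure_univ, smul_eq_mul, mul_one]
    rw [← ENNReal.ofReal_add hp hq, show (1 + t) / 2 + (1 - t) / 2 = 1 by ring,
      ENNReal.ofReal_one]⟩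
  have hμ (f : Bool → ℝ) : ∫ b, f b ∂μ = (1 + t) / 2 * f true + (1 - t) / 2 * f false := by
    rw [integral_fintype (hf := .of_finite)]
    simp [μ, Measure.real, ENNReal.toReal_ofReal, hp, hq]
  let X : Bool → ℝ := fun b => if b then 1 else -1
  have hmean : μ[X] = t := by
    rw [hμ]
    simp only [↓reduceIte, mul_one, Bool.false_eq_true, mul_neg, X]
    ring
  -- Hoeffding's lemma for the `±1`-valued variable with mean `t`
  have hmgf : (1 + t) / 2 * exp (x * (1 - t)) + (1 - t) / 2 * exp (x * (-1 - t))
      ≤ exp (x ^ 2 / 2) := by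
    have h := (hasSubgaussianMGF_of_mem_Icc (μ := μ) (X := X) (a := -1) (b := 1) .of_discrete
      (ae_of_all _ fun b => by cases b <;> simp [X])).mgf_le x
    rw [hmean, mgf, hμ] at h
    norm_num [X] at h
    exact h
  calc cosh x + t * sinh x
      = exp (t * x) * ((1 + t) / 2 * exp (x * (1 - t)) + (1 - t) / 2 * exp (x * (-1 - t))) := by
        rw [cosh_eq, sinh_eq, mul_add, ← mul_assoc, ← mul_assoc, mul_comm (exp _),
          mul_comm (exp _), mul_assoc, mul_assoc, ← exp_add, ← exp_add]
        ring_nf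
    _ ≤ exp (t * x) * exp (x ^ 2 / 2) := by gcongr
    _ = exp (t * x + x ^ 2 / 2) := (exp_add _ _).symm

end Real

section ConditionalHoeffding

variable {Ω : Type*} {m m0 : MeasurableSpace Ω} {μ : Measure Ω} [IsFiniteMeasure μ] {X : Ω → ℝ}

theorem condExp_exp_mul_le (hm : m ≤ m0) (hXm : AEStronglyMeasurable X μ)
    (hX : ∀ᵐ ω ∂μ, |X ω| ≤ 1) (l : ℝ) :
    μ[fun ω => exp (l * X ω) | m] ≤ᵐ[μ] fun ω => exp (l * μ[X | m] ω + l ^ 2 / 2) := by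
  have hXint : Integrable X μ := .of_bound hXm 1 hX
  have hexp_int : Integrable (fun ω => exp (l * X ω)) μ :=
    integrable_exp_mul_of_mem_Icc hXm.aemeasurable (hX.mono fun _ => abs_le.1)
  have hlin : μ[(fun _ => cosh l) + sinh l • X | m] =ᵐ[μ] (fun _ => cosh l) + sinh l • μ[X | m] :=
    (condExp_add (integrable_const _) (hXint.smul _) m).trans <| by
      rw [condExp_const hm]
      exact Filter.EventuallyEq.rfl.add (condExp_smul _ _ _)
  have hconvex : (fun ω => exp (l * X ω)) ≤ᵐ[μ] (fun _ => cosh l) + sinh l • X :=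
    hX.mono fun ω hω => by
      simpa [mul_comm l, mul_comm (sinh l)] using exp_mul_le_cosh_add_mul_sinh hω l
  filter_upwards [condExp_mono (m := m) hexp_int ((integrable_const _).add (hXint.smul _)) hconvex,
    hlin, ae_bdd_abs_condExp_of_ae_bdd_abs (m := m) hX] with ω hle heq hbdd
  calc μ[fun ω => exp (l * X ω) | m] ω ≤ cosh l + μ[X | m] ω * sinh l := by
        rw [heq] at hle
        simpa [mul_comm] using hle
    _ ≤ exp (l * μ[X | m] ω + l ^ 2 / 2) := by
        simpa [mul_comm] using cosh_add_mul_sinh_le_exp hbdd l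

theorem condExp_exp_mul_sub_le (hm : m ≤ m0) (hXm : AEStronglyMeasurable X μ)
    (hX : ∀ᵐ ω ∂μ, |X ω| ≤ 1) {M : Ω → ℝ} (hM : StronglyMeasurable[m] M)
    (hXM : μ[X | m] =ᵐ[μ] M) (l : ℝ) :
    μ[fun ω => exp (l * (X ω - M ω)) | m] ≤ᵐ[μ] fun _ => exp (l ^ 2 / 2) := by
  have hM_bdd : ∀ᵐ ω ∂μ, ‖exp (-(l * M ω))‖ ≤ exp |l| := by
    filter_upwards [hXM, ae_bdd_abs_condExp_of_ae_bdd_abs (m := m) hX] with ω hω hbdd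
    rw [norm_of_nonneg (exp_pos _).le, exp_le_exp, ← hω, neg_le]
    calc -|l| ≤ -|l * μ[X | m] ω| :=
          neg_le_neg (by rw [abs_mul]; exact mul_le_of_le_one_right (abs_nonneg l) hbdd)
      _ ≤ l * μ[X | m] ω := neg_abs_le _
  have hsplit : (fun ω => exp (l * (X ω - M ω)))
      = (fun ω => exp (-(l * M ω))) * fun ω => exp (l * X ω) := by
    ext ω; rw [Pi.mul_apply, ← exp_add]; ring_nf
  have hexpM : StronglyMeasurable[m] fun ω => exp (-(l * M ω)) :=
    continuous_exp.comp_stronglyMeasurable (hM.const_mul l).neg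
  rw [hsplit]
  filter_upwards [condExp_stronglyMeasurable_mul_of_bound hm hexpM
      (integrable_exp_mul_of_mem_Icc hXm.aemeasurable (hX.mono fun _ => abs_le.1)) _ hM_bdd,
    condExp_exp_mul_le hm hXm hX l, hXM] with ω hpull hle hω
  rw [hpull, Pi.mul_apply, ← hω]
  calc exp (-(l * μ[X | m] ω)) * μ[fun ω => exp (l * X ω) | m] ω
      ≤ exp (-(l * μ[X | m] ω)) * exp (l * μ[X | m] ω + l ^ 2 / 2) := by gcongr
    _ = exp (l ^ 2 / 2) := by rw [← exp_add]; ring_nf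

end ConditionalHoeffding

theorem supermartingale_exp_mul_sum_sub {Ω : Type*} {m0 : MeasurableSpace Ω} {P : Measure Ω}
    [IsFiniteMeasure P] {𝒢 : Filtration ℕ m0} {D : ℕ → Ω → ℝ} {l c C : ℝ}
    (hD : ∀ t, 1 ≤ t → StronglyMeasurable[𝒢 t] (D t))
    (hD_bdd : ∀ t, 1 ≤ t → ∀ᵐ ω ∂P, |D t ω| ≤ C)
    (hD_mgf : ∀ t, P[fun ω => exp (l * D (t + 1) ω) | 𝒢 t] ≤ᵐ[P] fun _ => exp c) :
    Supermartingale (fun t ω => exp (l * ∑ i ∈ Finset.Icc 1 t, D i ω - c * t)) 𝒢 P := by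
  have hsum (t : ℕ) : StronglyMeasurable[𝒢 t] fun ω => ∑ i ∈ Finset.Icc 1 t, D i ω :=
    Finset.stronglyMeasurable_fun_sum _ fun i hi =>
      (hD i (Finset.mem_Icc.1 hi).1).mono (𝒢.mono (Finset.mem_Icc.1 hi).2)
  have hL : StronglyAdapted 𝒢 fun t ω => exp (l * ∑ i ∈ Finset.Icc 1 t, D i ω - c * t) :=
    fun t => continuous_exp.comp_stronglyMeasurable
      (((hsum t).const_mul l).sub stronglyMeasurable_const)
  have hsum_bdd (t : ℕ) : ∀ᵐ ω ∂P, |∑ i ∈ Finset.Icc 1 t, D i ω| ≤ t * C := by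
    have hall : ∀ᵐ ω ∂P, ∀ i, 1 ≤ i → |D i ω| ≤ C :=
      ae_all_iff.2 fun i => by
        by_cases hi : 1 ≤ i
        · exact (hD_bdd i hi).mono fun _ h _ => h
        · exact ae_of_all _ fun _ h => absurd h hi
    filter_upwards [hall] with ω hω
    calc |∑ i ∈ Finset.Icc 1 t, D i ω| ≤ ∑ i ∈ Finset.Icc 1 t, |D i ω| :=
          Finset.abs_sum_le_sum_abs _ _
      _ ≤ ∑ _i ∈ Finset.Icc 1 t, C :=
          Finset.sum_le_sum fun i hi => hω i (Finset.mem_Icc.1 hi).1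
      _ = t * C := by simp
  have hint (t : ℕ) : Integrable (fun ω => exp (l * ∑ i ∈ Finset.Icc 1 t, D i ω - c * t)) P :=
    .of_bound ((hL t).mono (𝒢.le t)).aestronglyMeasurable (exp (|l| * (t * C) - c * t)) <| by
      filter_upwards [hsum_bdd t] with ω hω
      rw [norm_of_nonneg (exp_pos _).le, exp_le_exp, sub_le_sub_iff_right]
      calc l * ∑ i ∈ Finset.Icc 1 t, D i ω ≤ |l| * |∑ i ∈ Finset.Icc 1 t, D i ω| := by
            rw [← abs_mul]; exact le_abs_self _
        _ ≤ |l| * (t * C) := by gcongr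
  refine supermartingale_nat hL hint fun t => ?_
  have hsucc : (fun ω => exp (l * ∑ i ∈ Finset.Icc 1 (t + 1), D i ω - c * ↑(t + 1)))
      = (fun ω => exp (l * ∑ i ∈ Finset.Icc 1 t, D i ω - c * t - c))
        * fun ω => exp (l * D (t + 1) ω) := by
    ext ω
    rw [Finset.sum_Icc_succ_top (by omega), Pi.mul_apply, ← exp_add]
    push_cast
    ring_nf
  have hF : StronglyMeasurable[𝒢 t] fun ω => exp (l * ∑ i ∈ Finset.Icc 1 t, D i ω - c * t - c) :=
    continuous_exp.comp_stronglyMeasurable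
      ((((hsum t).const_mul l).sub stronglyMeasurable_const).sub stronglyMeasurable_const)
  have hexpD : Integrable (fun ω => exp (l * D (t + 1) ω)) P :=
    integrable_exp_mul_of_mem_Icc ((hD (t + 1) (by omega)).mono (𝒢.le _)).aemeasurable
      ((hD_bdd (t + 1) (by omega)).mono fun _ => abs_le.1)
  simp only [hsucc]
  filter_upwards [condExp_mul_of_stronglyMeasurable_left hF (hsucc ▸ hint (t + 1)) hexpD,
    hD_mgf t] with ω hpull hmgf
  rw [hpull, Pi.mul_apply]
  calc exp (l * ∑ i ∈ Finset.Icc 1 t, D i ω - c * t - c)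
        * P[fun ω => exp (l * D (t + 1) ω) | 𝒢 t] ω
      ≤ exp (l * ∑ i ∈ Finset.Icc 1 t, D i ω - c * t - c) * exp c := by gcongr
    _ = exp (l * ∑ i ∈ Finset.Icc 1 t, D i ω - c * t) := by rw [← exp_add]; ring_nf

theorem MeasureTheory.Supermartingale.map {ι Ω Ω' : Type*} [Preorder ι] {m0 : MeasurableSpace Ω}
    {m' : MeasurableSpace Ω'} {ℱ : Filtration ι m0} {ℱ' : Filtration ι m'} {μ : Measure Ω}
    [IsFiniteMeasure μ] {Φ : Ω → Ω'} {f : ι → Ω' → ℝ}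
    (h : Supermartingale (fun i => f i ∘ Φ) ℱ μ) (hΦ : Measurable Φ)
    (hΦℱ : ∀ i, (ℱ' i).comap Φ ≤ ℱ i) (hf : StronglyAdapted ℱ' f) :
    Supermartingale f ℱ' (μ.map Φ) := by
  have hf_meas (i : ι) : AEStronglyMeasurable (f i) (μ.map Φ) :=
    ((hf i).mono (ℱ'.le i)).aestronglyMeasurable
  have hint (i : ι) : Integrable (f i) (μ.map Φ) :=
    (integrable_map_measure (hf_meas i) hΦ.aemeasurable).2 (h.integrable i)
  rw [← neg_neg f]
  refine (submartingale_of_setIntegral_le hf.neg (fun i => (hint i).neg)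
    fun i j hij s hs => ?_).neg
  have hs' : MeasurableSet s := ℱ'.le i s hs
  simp only [Pi.neg_apply, integral_neg, neg_le_neg_iff]
  rw [setIntegral_map hs' (hf_meas j) hΦ.aemeasurable,
    setIntegral_map hs' (hf_meas i) hΦ.aemeasurable]
  exact h.setIntegral_le hij (hΦℱ i _ ⟨s, hs, rfl⟩)

/-- `IsSubGaussianUniformBoundary` only quantifies over `Ω : Type`. A sample space in an arbitrary
universe is pushed forward to the path space `ℕ → ℝ × ℝ` of `(S, V)` with its natural filtration;
this requires the supermartingale to be a function of the path, hence the exponential process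
itself. -/
theorem IsSubGaussianUniformBoundary.measure_exists_le_le {u : ℝ → ℝ} {α : ℝ}
    (hu : IsSubGaussianUniformBoundary u α) {Ω : Type*} {m0 : MeasurableSpace Ω} {P : Measure Ω}
    [IsProbabilityMeasure P] (𝒢 : Filtration ℕ m0) {S V : ℕ → Ω → ℝ}
    (hS : Adapted 𝒢 S) (hV : Adapted 𝒢 V) (hS0 : ∀ ω, S 0 ω = 0) (hV0 : ∀ ω, V 0 ω = 0)
    (hV_nonneg : ∀ t ω, 0 ≤ V t ω)
    (hL : ∀ l : ℝ, 0 ≤ l → Supermartingale (fun t ω => exp (l * S t ω - l ^ 2 / 2 * V t ω)) 𝒢 P) :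
    P {ω | ∃ t : ℕ, 1 ≤ t ∧ u (V t ω) ≤ S t ω} ≤ ENNReal.ofReal α := by
  let Φ : Ω → ℕ → ℝ × ℝ := fun ω t => (S t ω, V t ω)
  let 𝒢' : Filtration ℕ (inferInstance : MeasurableSpace (ℕ → ℝ × ℝ)) :=
    Filtration.natural (fun t x => x t) fun t => (measurable_pi_apply t).stronglyMeasurable
  have hΦ : Measurable Φ :=
    measurable_pi_lambda _ fun t => ((hS t).prodMk (hV t)).mono (𝒢.le t) le_rfl
  have hΦ𝒢 (t : ℕ) : (𝒢' t).comap Φ ≤ 𝒢 t := by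
    simp only [𝒢', Filtration.natural, MeasurableSpace.comap_iSup, MeasurableSpace.comap_comp]
    exact iSup₂_le fun s hs => (((hS s).prodMk (hV s)).mono (𝒢.mono hs) le_rfl).comap_le
  let S' : ℕ → (ℕ → ℝ × ℝ) → ℝ := fun t x => if t = 0 then 0 else (x t).1
  let V' : ℕ → (ℕ → ℝ × ℝ) → ℝ := fun t x => if t = 0 then 0 else max (x t).2 0
  have hS'Φ (t : ℕ) (ω : Ω) : S' t (Φ ω) = S t ω := by
    rcases t with _ | t <;> simp [S', Φ, hS0]
  have hV'Φ (t : ℕ) (ω : Ω) : V' t (Φ ω) = V t ω := by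
    rcases t with _ | t <;> simp [V', Φ, hV0, hV_nonneg]
  have hcoord (t : ℕ) : Measurable[𝒢' t] fun x : ℕ → ℝ × ℝ => x t :=
    measurable_iff_comap_le.2 (le_iSup₂_of_le t le_rfl le_rfl)
  have hS' : Adapted 𝒢' S' := fun t => by
    rcases t with _ | t
    · exact measurable_const
    · exact measurable_fst.comp (hcoord _)
  have hV' : Adapted 𝒢' V' := fun t => by
    rcases t with _ | t
    · exact measurable_const
    · exact (measurable_snd.comp (hcoord _)).max measurable_const
  have hcrossing := hu _ _ (P.map Φ) (Measure.isProbabilityMeasure_map hΦ.aemeasurable) 𝒢' S' V'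
    hS' hV' (fun _ => rfl) (fun _ => rfl) (fun t x => by rcases t with _ | t <;> simp [V'])
    fun l hl => ⟨fun t x => exp (l * S' t x - l ^ 2 / 2 * V' t x),
      Supermartingale.map (by simpa [Function.comp_def, hS'Φ, hV'Φ] using hL l hl) hΦ hΦ𝒢 ?_,
      fun _ _ => (exp_pos _).le, by simp [S', V'], fun _ => ae_of_all _ fun _ => le_rfl⟩
  · refine le_trans (le_of_eq ?_) ((Measure.le_map_apply hΦ.aemeasurable _).trans hcrossing)
    simp [hS'Φ, hV'Φ]
  · exact fun t => continuous_exp.comp_stronglyMeasurable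
      (((hS' t).stronglyMeasurable.const_mul l).sub ((hV' t).stronglyMeasurable.const_mul _))

theorem IsSubGaussianUniformBoundary.measure_exists_le_sum_sub_le {u : ℝ → ℝ} {α : ℝ}
    (hu : IsSubGaussianUniformBoundary u α) {Ω : Type*} {m0 : MeasurableSpace Ω} {P : Measure Ω}
    [IsProbabilityMeasure P] (𝒢 : Filtration ℕ m0) {X M : ℕ → Ω → ℝ}
    (hX : ∀ t, 1 ≤ t → Measurable[𝒢 t] (X t)) (hM : ∀ t, 1 ≤ t → Measurable[𝒢 (t - 1)] (M t))
    (hXM : ∀ t, 1 ≤ t → P[X t | 𝒢 (t - 1)] =ᵐ[P] M t)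
    (hX_bdd : ∀ t, 1 ≤ t → ∀ᵐ ω ∂P, |X t ω| ≤ 1) :
    P {ω | ∃ t : ℕ, 1 ≤ t ∧ u t ≤ ∑ i ∈ Finset.Icc 1 t, (X i ω - M i ω)} ≤ ENNReal.ofReal α := by
  have hM_meas (t : ℕ) (ht : 1 ≤ t) : Measurable[𝒢 t] (M t) :=
    (hM t ht).mono (𝒢.mono (Nat.sub_le t 1)) le_rfl
  have hsum : Adapted 𝒢 fun t ω => ∑ i ∈ Finset.Icc 1 t, (X i ω - M i ω) := fun t =>
    Finset.measurable_fun_sum _ fun i hi => by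
      obtain ⟨hi₁, hit⟩ := Finset.mem_Icc.1 hi
      exact ((hX i hi₁).sub (hM_meas i hi₁)).mono (𝒢.mono hit) le_rfl
  refine hu.measure_exists_le_le 𝒢 hsum (fun t => measurable_const) (fun _ => by simp)
    (fun _ => by simp) (fun _ _ => by positivity) fun l _ => ?_
  refine supermartingale_exp_mul_sum_sub (C := 2)
    (fun t ht => ((hX t ht).sub (hM_meas t ht)).stronglyMeasurable) (fun t ht => ?_) fun t => ?_
  · filter_upwards [hX_bdd t ht, hXM t ht,
      ae_bdd_abs_condExp_of_ae_bdd_abs (m := 𝒢 (t - 1)) (hX_bdd t ht)] with ω hXω hMω hcond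
    rw [← hMω]
    calc |X t ω - P[X t | 𝒢 (t - 1)] ω| ≤ |X t ω| + |P[X t | 𝒢 (t - 1)] ω| := abs_sub _ _
      _ ≤ 2 := by linarith
  · have hXM' := hXM (t + 1) (by omega)
    have hM' := hM (t + 1) (by omega)
    rw [Nat.add_sub_cancel] at hXM' hM'
    exact condExp_exp_mul_sub_le (𝒢.le t)
      ((hX (t + 1) (by omega)).mono (𝒢.le _) le_rfl).aestronglyMeasurable
      (hX_bdd (t + 1) (by omega)) hM'.stronglyMeasurable hXM' l

theorem ofReal_one_sub_le_measure_of_measure_compl_le {Ω : Type*} {m0 : MeasurableSpace Ω}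
    {P : Measure Ω} [IsProbabilityMeasure P] {s : Set Ω} {α : ℝ} (hα : 0 ≤ α)
    (h : P sᶜ ≤ ENNReal.ofReal α) : ENNReal.ofReal (1 - α) ≤ P s := by
  rw [ENNReal.ofReal_sub _ hα, ENNReal.ofReal_one, tsub_le_iff_right]
  calc 1 = P (s ∪ sᶜ) := by rw [union_compl_self, measure_univ]
    _ ≤ P s + P sᶜ := measure_union_le _ _
    _ ≤ P s + ENNReal.ofReal α := by gcongr

theorem compl_setOf_abs_avg_sub_lt_subset {Ω : Type*} (X M : ℕ → Ω → ℝ) (u : ℝ → ℝ) :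
    {ω | ∀ t : ℕ, 1 ≤ t →
      |(1 / (t : ℝ)) * ∑ i ∈ Finset.Icc 1 t, X i ω
        - (1 / (t : ℝ)) * ∑ i ∈ Finset.Icc 1 t, M i ω| < u t / t}ᶜ
      ⊆ {ω | ∃ t : ℕ, 1 ≤ t ∧ u t ≤ ∑ i ∈ Finset.Icc 1 t, (X i ω - M i ω)}
        ∪ {ω | ∃ t : ℕ, 1 ≤ t ∧ u t ≤ ∑ i ∈ Finset.Icc 1 t, ((-X) i ω - (-M) i ω)} := by
  intro ω hω
  simp only [mem_compl_iff, mem_ofPred_eq, not_forall, not_lt] at hω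
  obtain ⟨t, ht, hle⟩ := hω
  have ht₀ : (0 : ℝ) < t := by exact_mod_cast ht
  rw [← mul_sub, abs_mul, one_div, abs_inv, abs_of_pos ht₀, div_eq_inv_mul,
    mul_le_mul_iff_right₀ (inv_pos.2 ht₀), ← Finset.sum_sub_distrib] at hle
  rcases le_abs.1 hle with hpos | hneg
  · exact Or.inl ⟨t, ht, hpos⟩
  · refine Or.inr ⟨t, ht, hneg.trans_eq ?_⟩
    rw [← Finset.sum_neg_distrib]
    exact Finset.sum_congr rfl fun i _ => by simp only [Pi.neg_apply]; ring

theorem hoeffding_confidence_sequence_general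
    {Ω : Type*} {m0 : MeasurableSpace Ω} {P : Measure Ω} [IsProbabilityMeasure P]
    (𝒢 : Filtration ℕ m0)
    (δhat δ : ℕ → Ω → ℝ)
    (hδhat_adapted : ∀ t : ℕ, 1 ≤ t → Measurable[𝒢 t] (δhat t))
    (hδ_pred : ∀ t : ℕ, 1 ≤ t → Measurable[𝒢 (t - 1)] (δ t))
    (hcond : ∀ t : ℕ, 1 ≤ t → P[δhat t | 𝒢 (t - 1)] =ᵐ[P] δ t)
    (habs : ∀ t : ℕ, 1 ≤ t → ∀ᵐ ω ∂P, |δhat t ω| ≤ 1)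
    (α : ℝ) (hα : α ∈ Ioo (0:ℝ) 1)
    (u : ℝ → ℝ) (hu : IsSubGaussianUniformBoundary u (α / 2)) :
    ENNReal.ofReal (1 - α) ≤
      P {ω | ∀ t : ℕ, 1 ≤ t →
        |(1 / (t : ℝ)) * ∑ i ∈ Finset.Icc 1 t, δhat i ω
            - (1 / (t : ℝ)) * ∑ i ∈ Finset.Icc 1 t, δ i ω| < u (t : ℝ) / (t : ℝ)} := by
  have hupper := hu.measure_exists_le_sum_sub_le 𝒢 hδhat_adapted hδ_pred hcond habs
  have hlower := hu.measure_exists_le_sum_sub_le 𝒢 (X := -δhat) (M := -δ)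
    (fun t ht => (hδhat_adapted t ht).neg) (fun t ht => (hδ_pred t ht).neg)
    (fun t ht => (condExp_neg _ _).trans (hcond t ht).neg) (by simpa using habs)
  refine ofReal_one_sub_le_measure_of_measure_compl_le hα.1.le ?_
  calc P _ ≤ _ := measure_mono (compl_setOf_abs_avg_sub_lt_subset δhat δ u)
    _ ≤ ENNReal.ofReal (α / 2) + ENNReal.ofReal (α / 2) :=
        (measure_union_le _ _).trans (add_le_add hupper hlower)
    _ = ENNReal.ofReal α := by
        rw [← ENNReal.ofReal_add (by linarith [hα.1]) (by linarith [hα.1]), add_halves]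

/-- **Theorem 1 (Hoeffding-style confidence sequence).**
Suppose `E[δ̂_t | 𝒢_{t−1}] = δ_t` and `|δ̂_t| ≤ 1` a.s. for every `t ≥ 1`, and let
`α ∈ (0,1)`.  If `u` is a sub-Gaussian uniform boundary with crossing probability `α/2`,
then `P(∀ t ≥ 1, |Δ̂_t − Δ_t| < u(t)/t) ≥ 1 − α`, where `Δ̂_t = (1/t) Σ_{i=1}^t δ̂_i` and
`Δ_t = (1/t) Σ_{i=1}^t δ_i`. -/
theorem hoeffding_confidence_sequence
    {Ω : Type*} {m0 : MeasurableSpace Ω} {P : Measure Ω} [IsProbabilityMeasure P]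
    (𝒢 : Filtration ℕ m0)
    (δhat δ : ℕ → Ω → ℝ)
    (hδhat_adapted : ∀ t : ℕ, 1 ≤ t → Measurable[𝒢 t] (δhat t))
    (hδhat_bdd : ∃ C : ℝ, ∀ t ω, |δhat t ω| ≤ C)
    (hδ_pred : ∀ t : ℕ, 1 ≤ t → Measurable[𝒢 (t - 1)] (δ t))
    (hδ_bdd : ∃ C : ℝ, ∀ t ω, |δ t ω| ≤ C)
    (hcond : ∀ t : ℕ, 1 ≤ t → P[δhat t | 𝒢 (t - 1)] =ᵐ[P] δ t)
    (habs : ∀ t : ℕ, 1 ≤ t → ∀ᵐ ω ∂P, |δhat t ω| ≤ 1)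
    (α : ℝ) (hα : α ∈ Ioo (0:ℝ) 1)
    (u : ℝ → ℝ) (hu : IsSubGaussianUniformBoundary u (α / 2)) :
    ENNReal.ofReal (1 - α) ≤
      P {ω | ∀ t : ℕ, 1 ≤ t →
        |(1 / (t : ℝ)) * ∑ i ∈ Finset.Icc 1 t, δhat i ω
            - (1 / (t : ℝ)) * ∑ i ∈ Finset.Icc 1 t, δ i ω| < u (t : ℝ) / (t : ℝ)} :=
  hoeffding_confidence_sequence_general 𝒢 δhat δ hδhat_adapted hδ_pred hcond habs α hα u hu
end

section
/- (Hoeffding confidence sequence with the normal-mixture boundary.) Suppose E[δ̂_t | 𝒢_{t−1}] = δ_t and |δ̂_t| ≤ 1 a.s. for every t ≥ 1. Then for any α ∈ (0,1) and any ρ > 0, P( for all t ≥ 1, |Δ̂_t − Δ_t| < (1/t)·sqrt( (t+ρ)·log( 4(t+ρ)/(α² ρ) ) ) ) ≥ 1 − α. -/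
/-!
Write `S_t = ∑_{i ≤ t} (δ̂_i - δ_i)`. Mixing the exponential processes `exp (λ S_t - λ² t / 2)`
over `λ ~ N(0, ρ⁻¹)` gives `M_t = √(ρ / (t + ρ)) · exp (S_t² / (2 (t + ρ)))`, and `M_t ≥ 1 / α`
exactly when `|S_t|` reaches the boundary `√((t + ρ) log ((t + ρ) / (α² ρ)))`. So it suffices to
show that `M` is a nonnegative supermartingale with `M_0 = 1` and to apply Ville's inequality.

For the supermartingale step, convexity of `M_{t+1}` in the new increment `δ̂_{t+1} ∈ [-1, 1]`
bounds it by the chord through `δ̂_{t+1} = ±1`, which is affine in `δ̂_{t+1}`; taking conditional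
expectations replaces `δ̂_{t+1}` by `δ_{t+1}`. The resulting deterministic inequality is, under the
Gaussian integral representation of `M`, Hoeffding's lemma for the two-point law on `{-1, 1}` with
mean `δ_{t+1}`, integrated against `λ`.
-/

open MeasureTheory Set ProbabilityTheory

lemma exp_mul_sub_mul_sq_eq {c : ℝ} (hc : c ≠ 0) (y x : ℝ) :
    Real.exp (y * x - c / 2 * x ^ 2)
      = Real.exp (y ^ 2 / (2 * c)) * Real.exp (-(c / 2) * (x - y / c) ^ 2) := by
  rw [← Real.exp_add]; congr 1; field_simp; ring

lemma integrable_exp_mul_sub_mul_sq {c : ℝ} (hc : 0 < c) (y : ℝ) :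
    Integrable fun x : ℝ => Real.exp (y * x - c / 2 * x ^ 2) := by
  simp_rw [exp_mul_sub_mul_sq_eq hc.ne']
  exact ((integrable_exp_neg_mul_sq (by positivity)).comp_sub_right (y / c)).const_mul _

lemma integral_exp_mul_sub_mul_sq {c : ℝ} (hc : 0 < c) (y : ℝ) :
    ∫ x : ℝ, Real.exp (y * x - c / 2 * x ^ 2)
      = √(2 * Real.pi / c) * Real.exp (y ^ 2 / (2 * c)) := by
  simp_rw [exp_mul_sub_mul_sq_eq hc.ne']
  rw [integral_const_mul, integral_sub_right_eq_self (fun x => Real.exp (-(c / 2) * x ^ 2)),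
    integral_gaussian, mul_comm, div_div_eq_mul_div, mul_comm Real.pi]

/-- Hoeffding's lemma for the law on `{-1, 1}` with mean `δ`. -/
lemma two_point_mgf_le {δ : ℝ} (hδ : |δ| ≤ 1) (l : ℝ) :
    (1 - δ) / 2 * Real.exp (l * (-1 - δ)) + (1 + δ) / 2 * Real.exp (l * (1 - δ))
      ≤ Real.exp (l ^ 2 / 2) := by
  obtain ⟨hlo, hhi⟩ := abs_le.1 hδ
  let p : unitInterval := ⟨(1 + δ) / 2, by linarith, by linarith⟩
  have hint (f : ℝ → ℝ) :
      ∫ x, f x ∂Ber(1, -1, p) = (1 - δ) / 2 * f (-1) + (1 + δ) / 2 * f 1 := by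
    rw [integral_bernoulliMeasure, smul_eq_mul, smul_eq_mul]; ring
  have hsupp : ∀ᵐ x ∂Ber(1, -1, p), x ∈ Icc (-1 : ℝ) 1 :=
    ae_iff.2 (bernoulliMeasure_apply_of_notMem_of_notMem _ measurableSet_Icc.compl
      (by norm_num) (by norm_num))
  have hmean : ∫ x, id x ∂Ber(1, -1, p) = δ := by rw [hint]; simp only [id]; ring
  have := (hasSubgaussianMGF_of_mem_Icc aemeasurable_id hsupp).mgf_le l
  rw [mgf, hmean, hint] at this
  convert this using 2 <;> norm_num

lemma convexOn_exp_sq_div {c : ℝ} (hc : 0 ≤ c) :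
    ConvexOn ℝ univ fun s : ℝ => Real.exp (s ^ 2 / c) := by
  refine ⟨convex_univ, fun x _ y _ a b ha hb hab => ?_⟩
  calc Real.exp ((a • x + b • y) ^ 2 / c) ≤ Real.exp (a • (x ^ 2 / c) + b • (y ^ 2 / c)) := by
        rw [Real.exp_le_exp]
        simp only [smul_eq_mul, ← mul_div_assoc, ← add_div]
        gcongr
        exact (even_two.convexOn_pow).2 (mem_univ x) (mem_univ y) ha hb hab
    _ ≤ a • Real.exp (x ^ 2 / c) + b • Real.exp (y ^ 2 / c) :=
        convexOn_exp.2 (mem_univ _) (mem_univ _) ha hb hab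

section ConditionalExpectation

variable {Ω : Type*} {m m0 : MeasurableSpace Ω} {μ : Measure Ω}

lemma ae_abs_le_of_condExp_ae_eq {X Y : Ω → ℝ} {R : ℝ} (hX : ∀ᵐ ω ∂μ, |X ω| ≤ R)
    (hXY : μ[X | m] =ᵐ[μ] Y) : ∀ᵐ ω ∂μ, |Y ω| ≤ R := by
  filter_upwards [ae_bdd_abs_condExp_of_ae_bdd_abs (m := m) hX, hXY] with ω h₁ h₂
  rwa [← h₂]

lemma condExp_comp_add_le_chord [IsFiniteMeasure μ] (hm : m ≤ m0) {f : ℝ → ℝ}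
    (hf : ConvexOn ℝ univ f) {Z X Y : Ω → ℝ} (hZ : Measurable[m] Z)
    (hX : AEStronglyMeasurable X μ) (hX1 : ∀ᵐ ω ∂μ, |X ω| ≤ 1) (hXY : μ[X | m] =ᵐ[μ] Y)
    (hfX : Integrable (fun ω => f (Z ω + X ω)) μ) (hf_sub : Integrable (fun ω => f (Z ω - 1)) μ)
    (hf_add : Integrable (fun ω => f (Z ω + 1)) μ) :
    μ[fun ω => f (Z ω + X ω) | m]
      ≤ᵐ[μ] fun ω => (1 - Y ω) / 2 * f (Z ω - 1) + (1 + Y ω) / 2 * f (Z ω + 1) := by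
  have hf_meas : Measurable f := (continuousOn_univ.1 (hf.continuousOn isOpen_univ)).measurable
  set a : Ω → ℝ := fun ω => (f (Z ω - 1) + f (Z ω + 1)) / 2
  set b : Ω → ℝ := fun ω => (f (Z ω + 1) - f (Z ω - 1)) / 2
  have ha_meas : StronglyMeasurable[m] a :=
    ((hf_meas.comp (hZ.sub_const 1)).add (hf_meas.comp (hZ.add_const 1))).div_const 2
      |>.stronglyMeasurable
  have hb_meas : StronglyMeasurable[m] b :=
    ((hf_meas.comp (hZ.add_const 1)).sub (hf_meas.comp (hZ.sub_const 1))).div_const 2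
      |>.stronglyMeasurable
  have ha_int : Integrable a μ := (hf_sub.add hf_add).div_const 2
  have hX_int : Integrable X μ := .of_bound hX 1 hX1
  have hbX_int : Integrable (b * X) μ := ((hf_add.sub hf_sub).div_const 2).mul_bdd hX (c := 1) hX1
  have hchord : (fun ω => f (Z ω + X ω)) ≤ᵐ[μ] a + b * X := by
    filter_upwards [hX1] with ω hω
    obtain ⟨hlo, hhi⟩ := abs_le.1 hω
    have hw₁ : 0 ≤ (1 - X ω) / 2 := by linarith
    have hw₂ : 0 ≤ (1 + X ω) / 2 := by linarith
    calc f (Z ω + X ω) = f ((1 - X ω) / 2 * (Z ω - 1) + (1 + X ω) / 2 * (Z ω + 1)) := by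
          ring_nf
      _ ≤ (1 - X ω) / 2 * f (Z ω - 1) + (1 + X ω) / 2 * f (Z ω + 1) := by
          simpa only [smul_eq_mul] using hf.2 (mem_univ _) (mem_univ _) hw₁ hw₂ (by ring)
      _ = (a + b * X) ω := by simp only [a, b, Pi.add_apply, Pi.mul_apply]; ring
  filter_upwards [condExp_mono hfX (ha_int.add hbX_int) hchord, condExp_add ha_int hbX_int m,
    condExp_mul_of_stronglyMeasurable_left hb_meas hbX_int hX_int, hXY] with ω h₁ h₂ h₃ h₄
  rw [condExp_of_stronglyMeasurable hm ha_meas ha_int] at h₂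
  simp only [Pi.add_apply, Pi.mul_apply] at h₂ h₃
  rw [h₂, h₃, h₄] at h₁
  simp only [a, b] at h₁
  linarith

end ConditionalExpectation

namespace MeasureTheory.Supermartingale

variable {Ω : Type*} {m0 : MeasurableSpace Ω} {P : Measure Ω} [IsFiniteMeasure P]
  {𝒢 : Filtration ℕ m0} {M : ℕ → Ω → ℝ}

/-- Optional stopping at the first time `M` reaches `ε` before `N`. -/
lemma mul_measureReal_exists_le_le (hM : Supermartingale M 𝒢 P) (hnonneg : 0 ≤ M) (ε : ℝ)
    (N : ℕ) : ε * P.real {ω | ∃ j ≤ N, ε ≤ M j ω} ≤ ∫ ω, M 0 ω ∂P := by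
  set C := {ω | ∃ j ≤ N, ε ≤ M j ω}
  let τ : Ω → ℕ∞ := fun ω => (hittingBtwn M (Ici ε) 0 N ω : ℕ)
  have hτ : IsStoppingTime 𝒢 τ :=
    hM.stronglyAdapted.adapted.isStoppingTime_hittingBtwn measurableSet_Ici
  have hτN : ∀ ω, τ ω ≤ N := fun ω => WithTop.coe_le_coe.2 (hittingBtwn_le ω)
  have hC : MeasurableSet C := by
    rw [show C = ⋃ j ≤ N, {ω | ε ≤ M j ω} by ext; simp [C]]
    exact .iUnion fun j => .iUnion fun _ =>
      measurableSet_le measurable_const ((hM.stronglyAdapted j).measurable.le (𝒢.le j))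
  have hint : Integrable (stoppedValue M τ) P := integrable_stoppedValue ℕ hτ hM.integrable hτN
  have hopt : ∫ ω, stoppedValue M τ ω ∂P ≤ ∫ ω, M 0 ω ∂P := by
    have := hM.neg.expected_stoppedValue_mono (isStoppingTime_const 𝒢 0) hτ
      (fun ω => WithTop.coe_le_coe.2 (Nat.zero_le _)) hτN
    simpa [stoppedValue, integral_neg] using this
  calc ε * P.real C ≤ ∫ ω in C, stoppedValue M τ ω ∂P :=
        setIntegral_ge_of_const_le_real hC (measure_ne_top P _)
          (fun ω ⟨j, hjN, hj⟩ => stoppedValue_hittingBtwn_mem ⟨j, ⟨Nat.zero_le j, hjN⟩, hj⟩)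
          hint.integrableOn
    _ ≤ ∫ ω, stoppedValue M τ ω ∂P :=
        setIntegral_le_integral hint (.of_forall fun ω => hnonneg _ _)
    _ ≤ ∫ ω, M 0 ω ∂P := hopt

/-- **Ville's inequality**. -/
lemma measure_exists_le_le (hM : Supermartingale M 𝒢 P) (hnonneg : 0 ≤ M) {ε : ℝ} (hε : 0 < ε) :
    P {ω | ∃ t, ε ≤ M t ω} ≤ ENNReal.ofReal ((∫ ω, M 0 ω ∂P) / ε) := by
  have hunion : {ω | ∃ t, ε ≤ M t ω} = ⋃ N, {ω | ∃ j ≤ N, ε ≤ M j ω} := by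
    ext ω
    simp only [mem_ofPred_eq, mem_iUnion]
    exact ⟨fun ⟨t, ht⟩ => ⟨t, t, le_rfl, ht⟩, fun ⟨_, j, _, hj⟩ => ⟨j, hj⟩⟩
  have hmono : Monotone fun N => {ω | ∃ j ≤ N, ε ≤ M j ω} :=
    fun N N' hN _ ⟨j, hj, hεj⟩ => ⟨j, hj.trans hN, hεj⟩
  rw [hunion, hmono.measure_iUnion]
  refine iSup_le fun N => ?_
  rw [← ofReal_measureReal (measure_ne_top P _)]
  gcongr
  rw [le_div_iff₀' hε]
  exact hM.mul_measureReal_exists_le_le hnonneg ε N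

end MeasureTheory.Supermartingale

/-- `normalMixture ρ v s = ∫ exp (λ s - λ² v / 2) dN(0, ρ⁻¹)(λ)`; `v` plays the role of the time. -/
noncomputable def normalMixture (ρ v s : ℝ) : ℝ :=
  √(ρ / (v + ρ)) * Real.exp (s ^ 2 / (2 * (v + ρ)))

section NormalMixture

variable {ρ v : ℝ}

lemma continuous_normalMixture (ρ v : ℝ) : Continuous (normalMixture ρ v) := by
  unfold normalMixture; fun_prop

lemma normalMixture_nonneg (ρ v s : ℝ) : 0 ≤ normalMixture ρ v s := by
  unfold normalMixture; positivity

lemma normalMixture_eq_integral (hρ : 0 ≤ ρ) (hw : 0 < v + ρ) (s : ℝ) :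
    normalMixture ρ v s
      = √(ρ / (2 * Real.pi)) * ∫ l : ℝ, Real.exp (s * l - (v + ρ) / 2 * l ^ 2) := by
  rw [integral_exp_mul_sub_mul_sq hw, ← mul_assoc, ← Real.sqrt_mul (by positivity),
    normalMixture]
  congr 2
  field_simp

lemma convexOn_normalMixture (hw : 0 ≤ v + ρ) : ConvexOn ℝ univ (normalMixture ρ v) :=
  (convexOn_exp_sq_div (by positivity)).smul (Real.sqrt_nonneg _)

lemma normalMixture_le_of_abs_le {s C : ℝ} (hw : 0 ≤ v + ρ) (hs : |s| ≤ C) :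
    normalMixture ρ v s ≤ normalMixture ρ v C := by
  unfold normalMixture
  gcongr √_ * Real.exp (?_ / _)
  exact sq_le_sq' (abs_le.1 hs).1 (abs_le.1 hs).2

lemma normalMixture_two_point_le {δ : ℝ} (hρ : 0 ≤ ρ) (hw : 0 < v + ρ) (hδ : |δ| ≤ 1) (s : ℝ) :
    (1 - δ) / 2 * normalMixture ρ (v + 1) (s - δ - 1)
      + (1 + δ) / 2 * normalMixture ρ (v + 1) (s - δ + 1) ≤ normalMixture ρ v s := by
  have hw' : 0 < v + 1 + ρ := by linarith
  have hpoint : ∀ l : ℝ,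
      (1 - δ) / 2 * Real.exp ((s - δ - 1) * l - (v + 1 + ρ) / 2 * l ^ 2)
        + (1 + δ) / 2 * Real.exp ((s - δ + 1) * l - (v + 1 + ρ) / 2 * l ^ 2)
      ≤ Real.exp (s * l - (v + ρ) / 2 * l ^ 2) := fun l => calc
    _ = Real.exp (s * l - (v + ρ) / 2 * l ^ 2) * Real.exp (-(l ^ 2 / 2))
          * ((1 - δ) / 2 * Real.exp (l * (-1 - δ)) + (1 + δ) / 2 * Real.exp (l * (1 - δ))) := by
        have hsplit (c : ℝ) : Real.exp ((s - δ + c) * l - (v + 1 + ρ) / 2 * l ^ 2)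
            = Real.exp (s * l - (v + ρ) / 2 * l ^ 2) * Real.exp (-(l ^ 2 / 2))
              * Real.exp (l * (c - δ)) := by
          rw [← Real.exp_add, ← Real.exp_add]; ring_nf
        rw [sub_eq_add_neg (s - δ), hsplit, hsplit]
        ring
    _ ≤ Real.exp (s * l - (v + ρ) / 2 * l ^ 2) * Real.exp (-(l ^ 2 / 2))
          * Real.exp (l ^ 2 / 2) := by
        gcongr; exact two_point_mgf_le hδ l
    _ = Real.exp (s * l - (v + ρ) / 2 * l ^ 2) := by
        rw [mul_assoc, ← Real.exp_add, neg_add_cancel, Real.exp_zero, mul_one]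
  have hint (y : ℝ) := integrable_exp_mul_sub_mul_sq hw' y
  simp only [normalMixture_eq_integral hρ hw', normalMixture_eq_integral hρ hw]
  calc _ = √(ρ / (2 * Real.pi)) * ∫ l : ℝ,
          ((1 - δ) / 2 * Real.exp ((s - δ - 1) * l - (v + 1 + ρ) / 2 * l ^ 2)
            + (1 + δ) / 2 * Real.exp ((s - δ + 1) * l - (v + 1 + ρ) / 2 * l ^ 2)) := by
        rw [integral_add ((hint _).const_mul _) ((hint _).const_mul _), integral_const_mul,
          integral_const_mul]
        ring
    _ ≤ _ := mul_le_mul_of_nonneg_left (integral_mono (((hint _).const_mul _).add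
          ((hint _).const_mul _)) (integrable_exp_mul_sub_mul_sq hw _) hpoint)
          (Real.sqrt_nonneg _)

lemma inv_le_normalMixture {α s : ℝ} (hρ : 0 < ρ) (hw : 0 < v + ρ) (hα : 0 < α)
    (hs : √((v + ρ) * Real.log ((v + ρ) / (α ^ 2 * ρ))) ≤ |s|) :
    α⁻¹ ≤ normalMixture ρ v s := by
  rw [Real.sqrt_le_left (abs_nonneg s), sq_abs] at hs
  calc α⁻¹ = √(ρ / (v + ρ)) * Real.exp (Real.log ((v + ρ) / (α ^ 2 * ρ)) / 2) := by
        rw [Real.exp_half, Real.exp_log (by positivity), ← Real.sqrt_mul (by positivity),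
          show ρ / (v + ρ) * ((v + ρ) / (α ^ 2 * ρ)) = α⁻¹ ^ 2 by field_simp,
          Real.sqrt_sq (by positivity)]
    _ ≤ normalMixture ρ v s := by
        refine mul_le_mul_of_nonneg_left (Real.exp_le_exp.2 ?_) (Real.sqrt_nonneg _)
        rw [div_le_div_iff₀ two_pos (by positivity)]
        linarith

variable {Ω : Type*} {m m0 : MeasurableSpace Ω} {μ : Measure Ω} [IsFiniteMeasure μ]

lemma integrable_normalMixture_comp {C : ℝ} (hw : 0 ≤ v + ρ) {g : Ω → ℝ}
    (hg : AEStronglyMeasurable g μ) (hgC : ∀ᵐ ω ∂μ, |g ω| ≤ C) :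
    Integrable (fun ω => normalMixture ρ v (g ω)) μ := by
  refine .of_bound ((continuous_normalMixture ρ v).comp_aestronglyMeasurable hg)
    (normalMixture ρ v C) ?_
  filter_upwards [hgC] with ω hω
  rw [Real.norm_of_nonneg (normalMixture_nonneg ρ v _)]
  exact normalMixture_le_of_abs_le hw hω

lemma condExp_normalMixture_add_sub_le (hm : m ≤ m0) (hρ : 0 ≤ ρ) (hw : 0 < v + ρ)
    {S X Y : Ω → ℝ} {C : ℝ} (hS : Measurable[m] S) (hSC : ∀ᵐ ω ∂μ, |S ω| ≤ C)
    (hY : Measurable[m] Y) (hX : AEStronglyMeasurable X μ) (hX1 : ∀ᵐ ω ∂μ, |X ω| ≤ 1)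
    (hXY : μ[X | m] =ᵐ[μ] Y) :
    μ[fun ω => normalMixture ρ (v + 1) (S ω + (X ω - Y ω)) | m]
      ≤ᵐ[μ] fun ω => normalMixture ρ v (S ω) := by
  have hY1 := ae_abs_le_of_condExp_ae_eq hX1 hXY
  set Z : Ω → ℝ := fun ω => S ω - Y ω
  have hZ : Measurable[m] Z := hS.sub hY
  have hint (c : Ω → ℝ) (hc : AEStronglyMeasurable c μ) (hc1 : ∀ᵐ ω ∂μ, |c ω| ≤ 1) :
      Integrable (fun ω => normalMixture ρ (v + 1) (Z ω + c ω)) μ := by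
    refine integrable_normalMixture_comp (C := C + 2) (by linarith)
      ((hZ.mono hm le_rfl).aestronglyMeasurable.add hc) ?_
    filter_upwards [hSC, hY1, hc1] with ω h₁ h₂ h₃
    linarith [abs_add_le (Z ω) (c ω), abs_sub (S ω) (Y ω)]
  have hchord := condExp_comp_add_le_chord hm (convexOn_normalMixture (by linarith)) hZ hX hX1
    hXY (hint X hX hX1)
    (by simpa [sub_eq_add_neg] using hint (fun _ => -1) aestronglyMeasurable_const (by simp))
    (hint (fun _ => 1) aestronglyMeasurable_const (by simp))
  have hshift : (fun ω => normalMixture ρ (v + 1) (S ω + (X ω - Y ω)))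
      = fun ω => normalMixture ρ (v + 1) (Z ω + X ω) := by
    funext ω; congr 1; simp only [Z]; ring
  rw [hshift]
  filter_upwards [hchord, hY1] with ω h₁ h₂
  exact h₁.trans (normalMixture_two_point_le hρ hw h₂ (S ω))

end NormalMixture

theorem supermartingale_normalMixture {Ω : Type*} {m0 : MeasurableSpace Ω} {P : Measure Ω}
    [IsFiniteMeasure P] (𝒢 : Filtration ℕ m0) {X Y : ℕ → Ω → ℝ} {ρ : ℝ} (hρ : 0 < ρ)
    (hX_adapted : ∀ t : ℕ, 1 ≤ t → Measurable[𝒢 t] (X t))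
    (hY_pred : ∀ t : ℕ, 1 ≤ t → Measurable[𝒢 (t - 1)] (Y t))
    (hXY : ∀ t : ℕ, 1 ≤ t → P[X t | 𝒢 (t - 1)] =ᵐ[P] Y t)
    (hX1 : ∀ t : ℕ, 1 ≤ t → ∀ᵐ ω ∂P, |X t ω| ≤ 1) :
    Supermartingale
      (fun (t : ℕ) ω => normalMixture ρ t (∑ i ∈ Finset.Icc 1 t, (X i ω - Y i ω))) 𝒢 P := by
  set S : ℕ → Ω → ℝ := fun t ω => ∑ i ∈ Finset.Icc 1 t, (X i ω - Y i ω)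
  have hS_meas (t : ℕ) : Measurable[𝒢 t] (S t) :=
    Finset.measurable_sum _ fun i hi => by
      obtain ⟨hi₁, hit⟩ := Finset.mem_Icc.1 hi
      exact ((hX_adapted i hi₁).mono (𝒢.mono hit) le_rfl).sub
        ((hY_pred i hi₁).mono (𝒢.mono (by omega)) le_rfl)
  have hS_bdd (t : ℕ) : ∀ᵐ ω ∂P, |S t ω| ≤ 2 * t := by
    have : ∀ᵐ ω ∂P, ∀ i ∈ Finset.Icc 1 t, |X i ω - Y i ω| ≤ 2 :=
      (Filter.eventually_all_finset _).2 fun i hi => by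
        have hi₁ := (Finset.mem_Icc.1 hi).1
        filter_upwards [hX1 i hi₁, ae_abs_le_of_condExp_ae_eq (hX1 i hi₁) (hXY i hi₁)]
          with ω h₁ h₂
        linarith [abs_sub (X i ω) (Y i ω)]
    filter_upwards [this] with ω h
    calc |S t ω| ≤ ∑ i ∈ Finset.Icc 1 t, |X i ω - Y i ω| := Finset.abs_sum_le_sum_abs _ _
      _ ≤ ∑ i ∈ Finset.Icc 1 t, (2 : ℝ) := Finset.sum_le_sum h
      _ = 2 * t := by simp [mul_comm]
  refine supermartingale_nat
    (fun t => ((continuous_normalMixture ρ t).measurable.comp (hS_meas t)).stronglyMeasurable)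
    (fun t => integrable_normalMixture_comp (by positivity)
      ((hS_meas t).mono (𝒢.le t) le_rfl).aestronglyMeasurable (hS_bdd t)) fun t => ?_
  have ht : 1 ≤ t + 1 := by omega
  simp only [Finset.sum_Icc_succ_top ht, Nat.cast_succ]
  exact condExp_normalMixture_add_sub_le (𝒢.le t) hρ.le (by positivity) (hS_meas t) (hS_bdd t)
    (by simpa using hY_pred (t + 1) ht)
    ((hX_adapted (t + 1) ht).mono (𝒢.le _) le_rfl).aestronglyMeasurable (hX1 (t + 1) ht)
    (by simpa using hXY (t + 1) ht)

theorem hoeffding_confidence_sequence_normal_mixture_general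
    {Ω : Type*} {m0 : MeasurableSpace Ω} {P : Measure Ω} [IsProbabilityMeasure P]
    (𝒢 : Filtration ℕ m0)
    (δhat δ : ℕ → Ω → ℝ)
    (hδhat_adapted : ∀ t : ℕ, 1 ≤ t → Measurable[𝒢 t] (δhat t))
    (hδ_pred : ∀ t : ℕ, 1 ≤ t → Measurable[𝒢 (t - 1)] (δ t))
    (hcond : ∀ t : ℕ, 1 ≤ t → P[δhat t | 𝒢 (t - 1)] =ᵐ[P] δ t)
    (habs : ∀ t : ℕ, 1 ≤ t → ∀ᵐ ω ∂P, |δhat t ω| ≤ 1)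
    (α : ℝ) (hα : α ∈ Ioo (0:ℝ) 1) (ρ : ℝ) (hρ : 0 < ρ) :
    ENNReal.ofReal (1 - α) ≤
      P {ω | ∀ t : ℕ, 1 ≤ t →
        |(1 / (t : ℝ)) * ∑ i ∈ Finset.Icc 1 t, δhat i ω
            - (1 / (t : ℝ)) * ∑ i ∈ Finset.Icc 1 t, δ i ω|
          < (1 / (t : ℝ)) *
              Real.sqrt (((t : ℝ) + ρ) * Real.log (4 * ((t : ℝ) + ρ) / (α ^ 2 * ρ)))} := by
  obtain ⟨hα0, -⟩ := hα
  set M : ℕ → Ω → ℝ := fun t ω => normalMixture ρ t (∑ i ∈ Finset.Icc 1 t, (δhat i ω - δ i ω))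
  have hM : Supermartingale M 𝒢 P :=
    supermartingale_normalMixture 𝒢 hρ hδhat_adapted hδ_pred hcond habs
  have hM0 : ∫ ω, M 0 ω ∂P = 1 := by simp [M, normalMixture, hρ.ne']
  have hville : P {ω | ∃ t, α⁻¹ ≤ M t ω} ≤ ENNReal.ofReal α := by
    simpa [hM0] using hM.measure_exists_le_le (fun t ω => normalMixture_nonneg _ _ _) (inv_pos.2 hα0)
  calc ENNReal.ofReal (1 - α) = 1 - ENNReal.ofReal α := by
        rw [ENNReal.ofReal_sub _ hα0.le, ENNReal.ofReal_one]
    _ ≤ 1 - P {ω | ∃ t, α⁻¹ ≤ M t ω} := by gcongr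
    _ ≤ P _ := by
        rw [tsub_le_iff_right, ← measure_univ (μ := P)]
        refine (measure_mono fun ω _ => or_iff_not_imp_left.2 fun hω => ?_).trans
          (measure_union_le _ _)
        simp only [mem_ofPred_eq, not_forall, not_lt] at hω
        obtain ⟨t, ht, h⟩ := hω
        have htpos : (0 : ℝ) < t := by exact_mod_cast ht
        rw [← mul_sub, abs_mul, abs_of_pos (by positivity), ← Finset.sum_sub_distrib,
          mul_le_mul_iff_right₀ (by positivity)] at h
        refine ⟨t, inv_le_normalMixture hρ (by positivity) hα0 (le_trans ?_ h)⟩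
        -- the stated radius has `4 (t + ρ)` where the boundary has `t + ρ` inside the logarithm
        gcongr
        linarith

/-- **Hoeffding confidence sequence with the normal-mixture boundary.**
Suppose `E[δ̂_t | 𝒢_{t−1}] = δ_t` and `|δ̂_t| ≤ 1` a.s. for every `t ≥ 1`.  Then for any
`α ∈ (0,1)` and any `ρ > 0`,
`P(∀ t ≥ 1, |Δ̂_t − Δ_t| < (1/t)·√((t+ρ)·log(4(t+ρ)/(α²ρ)))) ≥ 1 − α`,
where `Δ̂_t = (1/t) Σ_{i=1}^t δ̂_i` and `Δ_t = (1/t) Σ_{i=1}^t δ_i`. -/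
theorem hoeffding_confidence_sequence_normal_mixture
    {Ω : Type*} {m0 : MeasurableSpace Ω} {P : Measure Ω} [IsProbabilityMeasure P]
    (𝒢 : Filtration ℕ m0)
    (δhat δ : ℕ → Ω → ℝ)
    (hδhat_adapted : ∀ t : ℕ, 1 ≤ t → Measurable[𝒢 t] (δhat t))
    (hδhat_bdd : ∃ C : ℝ, ∀ t ω, |δhat t ω| ≤ C)
    (hδ_pred : ∀ t : ℕ, 1 ≤ t → Measurable[𝒢 (t - 1)] (δ t))
    (hδ_bdd : ∃ C : ℝ, ∀ t ω, |δ t ω| ≤ C)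
    (hcond : ∀ t : ℕ, 1 ≤ t → P[δhat t | 𝒢 (t - 1)] =ᵐ[P] δ t)
    (habs : ∀ t : ℕ, 1 ≤ t → ∀ᵐ ω ∂P, |δhat t ω| ≤ 1)
    (α : ℝ) (hα : α ∈ Ioo (0:ℝ) 1) (ρ : ℝ) (hρ : 0 < ρ) :
    ENNReal.ofReal (1 - α) ≤
      P {ω | ∀ t : ℕ, 1 ≤ t →
        |(1 / (t : ℝ)) * ∑ i ∈ Finset.Icc 1 t, δhat i ω
            - (1 / (t : ℝ)) * ∑ i ∈ Finset.Icc 1 t, δ i ω|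
          < (1 / (t : ℝ)) *
              Real.sqrt (((t : ℝ) + ρ) * Real.log (4 * ((t : ℝ) + ρ) / (α ^ 2 * ρ)))} :=
  hoeffding_confidence_sequence_normal_mixture_general 𝒢 δhat δ hδhat_adapted hδ_pred hcond habs α
    hα ρ hρ
end

section
/- For every λ ∈ [0,1) and all real numbers Y and Z with Y − Z ≥ −1, exp( λY + (log(1−λ) + λ)(Y−Z)² ) ≤ e^{λZ}(1 − λZ) + λ e^{λZ} Y. -/
/-!
With `φ(u) = ∫₀¹ v / (1 + u v) dv` one has `u - log (1 + u) = u² φ(u)` for `u > -1`, and `φ` is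
antitone. For `x ≥ -1` this gives `λx - log (1 + λx) = (λx)² φ(λx) ≤ x² · λ² φ(-λ)
= x² (-λ - log (1 - λ))`, i.e. `exp (λx + (log (1 - λ) + λ) x²) ≤ 1 + λx`; multiplying by
`exp (λZ)` with `x = Y - Z` yields the claim.
-/

open Real Set intervalIntegral

lemma one_add_mul_pos_of_mem_Icc {a v : ℝ} (ha : -1 < a) (hv : v ∈ Icc (0 : ℝ) 1) :
    0 < 1 + a * v := by
  rcases hv.1.eq_or_lt with rfl | hv0
  · simp
  · nlinarith [mul_pos hv0 (show 0 < 1 + a by linarith), hv.2]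

lemma intervalIntegrable_div_one_add_mul {a : ℝ} (ha : -1 < a) :
    IntervalIntegrable (fun v => v / (1 + a * v)) MeasureTheory.volume 0 1 := by
  refine ContinuousOn.intervalIntegrable (continuousOn_id.div (by fun_prop) fun v hv => ?_)
  rw [uIcc_of_le zero_le_one] at hv
  exact (one_add_mul_pos_of_mem_Icc ha hv).ne'

lemma integral_div_one_add {a : ℝ} (ha : -1 < a) :
    ∫ u in (0 : ℝ)..a, u / (1 + u) = a - log (1 + a) := by
  have hpos : ∀ u ∈ uIcc 0 a, 0 < 1 + u := fun u hu => by
    rcases le_total 0 a with h | h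
    · rw [uIcc_of_le h] at hu; linarith [hu.1]
    · rw [uIcc_of_ge h] at hu; linarith [hu.1]
  have hderiv : ∀ u ∈ uIcc 0 a, HasDerivAt (fun u => u - log (1 + u)) (u / (1 + u)) u := by
    intro u hu
    have h : HasDerivAt (fun u => u - log (1 + u)) (1 - 1 / (1 + u)) u :=
      (hasDerivAt_id' u).sub (((hasDerivAt_id' u).const_add 1).log (hpos u hu).ne')
    convert h using 1
    field_simp [(hpos u hu).ne']
    ring
  have hint : IntervalIntegrable (fun u => u / (1 + u)) MeasureTheory.volume 0 a :=
    ContinuousOn.intervalIntegrable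
      (continuousOn_id.div (by fun_prop) fun u hu => (hpos u hu).ne')
  simp [integral_eq_sub_of_hasDerivAt hderiv hint]

lemma integral_div_one_add_eq_sq_mul (c : ℝ) :
    ∫ u in (0 : ℝ)..c, u / (1 + u) = c ^ 2 * ∫ v in (0 : ℝ)..1, v / (1 + c * v) := by
  have h := smul_integral_comp_mul_left (fun u => u / (1 + u)) c (a := 0) (b := 1)
  simp only [mul_zero, mul_one, smul_eq_mul, mul_div_assoc, integral_const_mul] at h
  rw [← h]
  ring

lemma sub_log_one_add_eq_sq_mul_integral {a : ℝ} (ha : -1 < a) :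
    a - log (1 + a) = a ^ 2 * ∫ v in (0 : ℝ)..1, v / (1 + a * v) := by
  rw [← integral_div_one_add ha, integral_div_one_add_eq_sq_mul]

lemma antitoneOn_integral_div_one_add_mul :
    AntitoneOn (fun a => ∫ v in (0 : ℝ)..1, v / (1 + a * v)) (Ioi (-1)) := by
  intro a ha b hb hab
  refine integral_mono_on zero_le_one (intervalIntegrable_div_one_add_mul hb)
    (intervalIntegrable_div_one_add_mul ha) fun v hv => ?_
  have hpos := one_add_mul_pos_of_mem_Icc ha hv
  have hle : a * v ≤ b * v := mul_le_mul_of_nonneg_right hab hv.1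
  gcongr
  exact hv.1

lemma mul_sub_log_one_add_mul_le {l x : ℝ} (hl0 : 0 ≤ l) (hl1 : l < 1) (hx : -1 ≤ x) :
    l * x - log (1 + l * x) ≤ x ^ 2 * (-l - log (1 - l)) := by
  have hl : -1 < -l := by linarith
  have hlx : -l ≤ l * x := by nlinarith
  have hmono := antitoneOn_integral_div_one_add_mul hl (hl.trans_le hlx) hlx
  have hψ := sub_log_one_add_eq_sq_mul_integral hl
  simp only [neg_mul, ← sub_eq_add_neg] at hmono hψ
  rw [sub_log_one_add_eq_sq_mul_integral (hl.trans_le hlx), hψ]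
  calc (l * x) ^ 2 * ∫ v in (0 : ℝ)..1, v / (1 + l * x * v)
      ≤ (l * x) ^ 2 * ∫ v in (0 : ℝ)..1, v / (1 - l * v) := by gcongr
    _ = x ^ 2 * ((-l) ^ 2 * ∫ v in (0 : ℝ)..1, v / (1 - l * v)) := by ring

lemma exp_mul_add_log_one_sub_add_mul_sq_le {l x : ℝ} (hl0 : 0 ≤ l) (hl1 : l < 1)
    (hx : -1 ≤ x) : exp (l * x + (log (1 - l) + l) * x ^ 2) ≤ 1 + l * x := by
  have hpos : 0 < 1 + l * x := by nlinarith
  rw [← le_log_iff_exp_le hpos]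
  linarith [mul_sub_log_one_add_mul_le hl0 hl1 hx]

/-- **Fan's inequality (key step for the empirical-Bernstein supermartingale).**
For every `λ ∈ [0,1)` and all real numbers `Y` and `Z` with `Y − Z ≥ −1`,
`exp(λY + (log(1−λ) + λ)(Y−Z)²) ≤ e^{λZ}(1 − λZ) + λ e^{λZ} Y`.
Here `log(1−λ) + λ = −ψ_E(λ)` where `ψ_E` is the sub-exponential CGF. -/
theorem fan_exponential_inequality
    (l : ℝ) (hl : l ∈ Set.Ico (0:ℝ) 1) (Y Z : ℝ) (hYZ : Y - Z ≥ -1) :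
    Real.exp (l * Y + (Real.log (1 - l) + l) * (Y - Z) ^ 2)
      ≤ Real.exp (l * Z) * (1 - l * Z) + l * Real.exp (l * Z) * Y := by
  have hsplit : l * Y + (log (1 - l) + l) * (Y - Z) ^ 2
      = l * Z + (l * (Y - Z) + (log (1 - l) + l) * (Y - Z) ^ 2) := by ring
  calc exp (l * Y + (log (1 - l) + l) * (Y - Z) ^ 2)
      = exp (l * Z) * exp (l * (Y - Z) + (log (1 - l) + l) * (Y - Z) ^ 2) := by
        rw [hsplit, exp_add]
    _ ≤ exp (l * Z) * (1 + l * (Y - Z)) := by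
        gcongr
        exact exp_mul_add_log_one_sub_add_mul_sq_le hl.1 hl.2 hYZ
    _ = exp (l * Z) * (1 - l * Z) + l * exp (l * Z) * Y := by ring
end

section
/- (Lemma 3, k-step-ahead forecasts.) If S has a linear equivalent, then for every i ≥ 1, E[δ̂_i | 𝒢_{i−1}] = δ_i almost surely, where δ_i = S_w(𝐩_i, r_i) − S_w(𝐪_i, r_i) and δ̂_i = S_w(𝐩_i, y_i) − S_w(𝐪_i, y_i). -/
/-!
Since `S(p, r) - S̃(p, r)` does not depend on `p`, the difference `S(p, x) - S(q, x)` equals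
`S̃(p, x) - S̃(q, x)` and is therefore affine in the outcome `x ∈ [0, 1]`. So is the weighted
score differential, and its two coefficients are functions of the forecasts only, hence
`𝒢_{t-1}`-measurable. Conditional expectation pulls out `𝒢_{t-1}`-measurable factors, so it
maps the differential at `y_t` to the differential at `E[y_t | 𝒢_{t-1}] = r_t`.
-/

open MeasureTheory Set

section ConditionalExpectation

variable {Ω : Type*} {m m0 : MeasurableSpace Ω} {μ : Measure Ω}

theorem condExp_add_mul_of_stronglyMeasurable (hm : m ≤ m0) [SigmaFinite (μ.trim hm)]
    {A B Y : Ω → ℝ} (hA : StronglyMeasurable[m] A) (hAi : Integrable A μ)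
    (hB : StronglyMeasurable[m] B) (hBY : Integrable (B * Y) μ) (hY : Integrable Y μ) :
    μ[A + B * Y | m] =ᵐ[μ] A + B * μ[Y | m] := by
  filter_upwards [condExp_add hAi hBY m, condExp_mul_of_stronglyMeasurable_left hB hBY hY]
    with ω hsum hprod
  rw [hsum, Pi.add_apply, Pi.add_apply, hprod, condExp_of_stronglyMeasurable hm hA hAi]

theorem condExp_comp_eq_of_affine [IsFiniteMeasure μ] (hm : m ≤ m0) {F : Ω → ℝ → ℝ}
    (hF0 : StronglyMeasurable[m] (F · 0)) (hF1 : StronglyMeasurable[m] (F · 1))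
    (hF0i : Integrable (F · 0) μ) (hF1i : Integrable (F · 1) μ)
    (hF : ∀ ω, ∀ x ∈ Icc (0 : ℝ) 1, F ω x = F ω 0 + (F ω 1 - F ω 0) * x)
    {Y R : Ω → ℝ} (hY : Measurable Y) (hY01 : ∀ ω, Y ω ∈ Icc (0 : ℝ) 1)
    (hR01 : ∀ ω, R ω ∈ Icc (0 : ℝ) 1) (hYR : μ[Y | m] =ᵐ[μ] R) :
    μ[fun ω => F ω (Y ω) | m] =ᵐ[μ] fun ω => F ω (R ω) := by
  have hY_bound : ∀ᵐ ω ∂μ, ‖Y ω‖ ≤ 1 := ae_of_all _ fun ω => by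
    rw [Real.norm_eq_abs, abs_le]; constructor <;> linarith [(hY01 ω).1, (hY01 ω).2]
  have hYi : Integrable Y μ := .of_bound hY.aestronglyMeasurable 1 hY_bound
  have hFY : (fun ω => F ω (Y ω)) = (F · 0) + ((F · 1) - (F · 0)) * Y :=
    funext fun ω => hF ω (Y ω) (hY01 ω)
  calc μ[fun ω => F ω (Y ω) | m]
      =ᵐ[μ] (F · 0) + ((F · 1) - (F · 0)) * μ[Y | m] := by
        rw [hFY]
        exact condExp_add_mul_of_stronglyMeasurable hm hF0 hF0i (hF1.sub hF0)
          ((hF1i.sub hF0i).mul_bdd hY.aestronglyMeasurable hY_bound) hYi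
    _ =ᵐ[μ] fun ω => F ω (R ω) := by
        filter_upwards [hYR] with ω hω
        simp only [Pi.add_apply, Pi.mul_apply, Pi.sub_apply, hω]
        exact (hF ω (R ω) (hR01 ω)).symm

end ConditionalExpectation

section ScoreDifferential

variable {ι : Type*} {S : ℝ → ℝ → ℝ}

def scoreDiff (S : ℝ → ℝ → ℝ) (s : Finset ι) (w : ι → ℝ) (p q : ι → ℝ) (x : ℝ) : ℝ :=
  ∑ i ∈ s, w i * S (p i) x - ∑ i ∈ s, w i * S (q i) x

theorem HasLinearEquivalent.sub_eq (hS : HasLinearEquivalent S) {p q x : ℝ}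
    (hp : p ∈ Icc (0 : ℝ) 1) (hq : q ∈ Icc (0 : ℝ) 1) (hx : x ∈ Icc (0 : ℝ) 1) :
    S p x - S q x = (S p 0 - S q 0) + ((S p 1 - S q 1) - (S p 0 - S q 0)) * x := by
  obtain ⟨St, -, -, hSt_affine, hS_sub_St⟩ := hS
  have h0 : (0 : ℝ) ∈ Icc (0 : ℝ) 1 := left_mem_Icc.mpr zero_le_one
  have h1 : (1 : ℝ) ∈ Icc (0 : ℝ) 1 := right_mem_Icc.mpr zero_le_one
  obtain ⟨a, b, hab⟩ := hSt_affine p hp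
  obtain ⟨a', b', hab'⟩ := hSt_affine q hq
  have hsub : ∀ z ∈ Icc (0 : ℝ) 1, S p z - S q z = St p z - St q z := fun z hz => by
    linarith [hS_sub_St p hp q hq z hz]
  rw [hsub x hx, hsub 0 h0, hsub 1 h1, hab x hx, hab' x hx, hab 0 h0, hab' 0 h0, hab 1 h1,
    hab' 1 h1]
  ring

theorem HasLinearEquivalent.scoreDiff_eq (hS : HasLinearEquivalent S) (s : Finset ι)
    (w : ι → ℝ) {p q : ι → ℝ} (hp : ∀ i, p i ∈ Icc (0 : ℝ) 1) (hq : ∀ i, q i ∈ Icc (0 : ℝ) 1)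
    {x : ℝ} (hx : x ∈ Icc (0 : ℝ) 1) :
    scoreDiff S s w p q x =
      scoreDiff S s w p q 0 + (scoreDiff S s w p q 1 - scoreDiff S s w p q 0) * x := by
  simp only [scoreDiff, ← Finset.sum_sub_distrib, ← mul_sub, hS.sub_eq (hp _) (hq _) hx,
    Finset.sum_mul, ← Finset.sum_add_distrib]
  exact Finset.sum_congr rfl fun i _ => by ring

variable {Ω : Type*} {m : MeasurableSpace Ω}

theorem measurable_scoreDiff (hS : Measurable (Function.uncurry S)) {s : Finset ι}
    (w : ι → ℝ) {p q : ι → Ω → ℝ} (hp : ∀ i ∈ s, Measurable[m] (p i))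
    (hq : ∀ i ∈ s, Measurable[m] (q i)) (x : ℝ) :
    Measurable[m] fun ω => scoreDiff S s w (p · ω) (q · ω) x := by
  have hSx : ∀ {f : Ω → ℝ}, Measurable[m] f → Measurable[m] fun ω => S (f ω) x :=
    fun hf => hS.comp (hf.prodMk measurable_const)
  exact (Finset.measurable_sum _ fun i hi => (hSx (hp i hi)).const_mul _).sub
    (Finset.measurable_sum _ fun i hi => (hSx (hq i hi)).const_mul _)

theorem integrable_scoreDiff {μ : Measure Ω} [IsFiniteMeasure μ]
    (hS : Measurable (Function.uncurry S))
    (hS_bdd : ∃ C : ℝ, ∀ p ∈ Icc (0:ℝ) 1, ∀ r ∈ Icc (0:ℝ) 1, |S p r| ≤ C) {s : Finset ι}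
    (w : ι → ℝ) {p q : ι → Ω → ℝ} (hp : ∀ i ∈ s, Measurable (p i))
    (hq : ∀ i ∈ s, Measurable (q i)) (hp01 : ∀ i ω, p i ω ∈ Icc (0 : ℝ) 1)
    (hq01 : ∀ i ω, q i ω ∈ Icc (0 : ℝ) 1) {x : ℝ} (hx : x ∈ Icc (0 : ℝ) 1) :
    Integrable (fun ω => scoreDiff S s w (p · ω) (q · ω) x) μ := by
  obtain ⟨C, hC⟩ := hS_bdd
  have hSx : ∀ {f : Ω → ℝ}, Measurable f → (∀ ω, f ω ∈ Icc (0 : ℝ) 1) →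
      Integrable (fun ω => S (f ω) x) μ := fun hf hf01 =>
    .of_bound (hS.comp (hf.prodMk measurable_const)).aestronglyMeasurable C
      (ae_of_all _ fun ω => hC _ (hf01 ω) x hx)
  exact (integrable_finsetSum _ fun i hi => (hSx (hp i hi) (hp01 i)).const_mul _).sub
    (integrable_finsetSum _ fun i hi => (hSx (hq i hi) (hq01 i)).const_mul _)

end ScoreDifferential

theorem kstep_score_differential_conditionally_unbiased_general
    {Ω : Type*} {m0 : MeasurableSpace Ω} {P : Measure Ω} [IsProbabilityMeasure P]
    (𝒢 : Filtration ℕ m0)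
    (S : ℝ → ℝ → ℝ)
    (hSmeas : Measurable (Function.uncurry S))
    (hSbdd : ∃ C : ℝ, ∀ p ∈ Icc (0:ℝ) 1, ∀ r ∈ Icc (0:ℝ) 1, |S p r| ≤ C)
    (hlin : HasLinearEquivalent S)
    (K : ℕ)
    (w : ℕ → ℝ)
    (p q : ℕ → ℕ → Ω → ℝ) (r y : ℕ → Ω → ℝ)
    (hp_pred : ∀ t : ℕ, 1 ≤ t → ∀ k ∈ Finset.Icc 1 K, Measurable[𝒢 (t - k)] (p t k))
    (hq_pred : ∀ t : ℕ, 1 ≤ t → ∀ k ∈ Finset.Icc 1 K, Measurable[𝒢 (t - k)] (q t k))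
    (hp_mem : ∀ t k ω, p t k ω ∈ Icc (0:ℝ) 1)
    (hq_mem : ∀ t k ω, q t k ω ∈ Icc (0:ℝ) 1)
    (hr_mem : ∀ t ω, r t ω ∈ Icc (0:ℝ) 1)
    (hy_adapted : ∀ t : ℕ, 1 ≤ t → Measurable[𝒢 t] (y t))
    (hy_mem : ∀ t ω, y t ω = 0 ∨ y t ω = 1)
    (hy_cond : ∀ t : ℕ, 1 ≤ t → P[y t | 𝒢 (t - 1)] =ᵐ[P] r t) :
    ∀ t : ℕ, 1 ≤ t →
      P[(fun ω => (∑ k ∈ Finset.Icc 1 K, w k * S (p t k ω) (y t ω))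
            - ∑ k ∈ Finset.Icc 1 K, w k * S (q t k ω) (y t ω)) | 𝒢 (t - 1)]
        =ᵐ[P] (fun ω => (∑ k ∈ Finset.Icc 1 K, w k * S (p t k ω) (r t ω))
            - ∑ k ∈ Finset.Icc 1 K, w k * S (q t k ω) (r t ω)) := by
  intro t ht
  have hpast : ∀ k ∈ Finset.Icc 1 K, 𝒢 (t - k) ≤ 𝒢 (t - 1) := fun k hk =>
    𝒢.mono (Nat.sub_le_sub_left (Finset.mem_Icc.mp hk).1 t)
  have hp : ∀ k ∈ Finset.Icc 1 K, Measurable[𝒢 (t - 1)] (p t k) := fun k hk =>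
    (hp_pred t ht k hk).mono (hpast k hk) le_rfl
  have hq : ∀ k ∈ Finset.Icc 1 K, Measurable[𝒢 (t - 1)] (q t k) := fun k hk =>
    (hq_pred t ht k hk).mono (hpast k hk) le_rfl
  have hF_meas (x : ℝ) := (measurable_scoreDiff hSmeas w hp hq x).stronglyMeasurable
  have hF_int {x : ℝ} (hx : x ∈ Icc (0 : ℝ) 1) := integrable_scoreDiff (μ := P) hSmeas hSbdd w
    (fun k hk => (hp k hk).mono (𝒢.le _) le_rfl) (fun k hk => (hq k hk).mono (𝒢.le _) le_rfl)
    (hp_mem t) (hq_mem t) hx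
  have hy01 (ω : Ω) : y t ω ∈ Icc (0 : ℝ) 1 := by
    rcases hy_mem t ω with h | h <;> simp [h]
  exact condExp_comp_eq_of_affine (𝒢.le _) (hF_meas 0) (hF_meas 1) (hF_int (by simp))
    (hF_int (by simp)) (fun ω x hx => hlin.scoreDiff_eq _ w (hp_mem t · ω) (hq_mem t · ω) hx)
    ((hy_adapted t ht).mono (𝒢.le t) le_rfl) hy01 (hr_mem t) (hy_cond t ht)

/-- **Lemma 3 (k-step-ahead forecasts).**
Fix `K ≥ 1` and weights `w ∈ [0,1]^K` summing to one, and let the `k`-step-ahead forecasts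
`p_t^{(k)}, q_t^{(k)}` be `[0,1]`-valued and `𝒢_{t−k}`-measurable, with the weighted score
`S_w(𝐩_t, r) = Σ_{k=1}^K w_k S(p_t^{(k)}, r)`.  If `S` has a linear equivalent, then for
every `t ≥ 1`, `E[δ̂_t | 𝒢_{t−1}] = δ_t` almost surely, where
`δ_t = S_w(𝐩_t, r_t) − S_w(𝐪_t, r_t)` and `δ̂_t = S_w(𝐩_t, y_t) − S_w(𝐪_t, y_t)`. -/
theorem kstep_score_differential_conditionally_unbiased
    {Ω : Type*} {m0 : MeasurableSpace Ω} {P : Measure Ω} [IsProbabilityMeasure P]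
    (𝒢 : Filtration ℕ m0)
    (S : ℝ → ℝ → ℝ)
    (hSmeas : Measurable (Function.uncurry S))
    (hSbdd : ∃ C : ℝ, ∀ p ∈ Icc (0:ℝ) 1, ∀ r ∈ Icc (0:ℝ) 1, |S p r| ≤ C)
    (hlin : HasLinearEquivalent S)
    (K : ℕ) (hK : 1 ≤ K)
    (w : ℕ → ℝ)
    (hw_mem : ∀ k ∈ Finset.Icc 1 K, w k ∈ Icc (0:ℝ) 1)
    (hw_sum : ∑ k ∈ Finset.Icc 1 K, w k = 1)
    (p q : ℕ → ℕ → Ω → ℝ) (r y : ℕ → Ω → ℝ)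
    (hp_pred : ∀ t : ℕ, 1 ≤ t → ∀ k ∈ Finset.Icc 1 K, Measurable[𝒢 (t - k)] (p t k))
    (hq_pred : ∀ t : ℕ, 1 ≤ t → ∀ k ∈ Finset.Icc 1 K, Measurable[𝒢 (t - k)] (q t k))
    (hr_pred : ∀ t : ℕ, 1 ≤ t → Measurable[𝒢 (t - 1)] (r t))
    (hp_mem : ∀ t k ω, p t k ω ∈ Icc (0:ℝ) 1)
    (hq_mem : ∀ t k ω, q t k ω ∈ Icc (0:ℝ) 1)
    (hr_mem : ∀ t ω, r t ω ∈ Icc (0:ℝ) 1)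
    (hy_adapted : ∀ t : ℕ, 1 ≤ t → Measurable[𝒢 t] (y t))
    (hy_mem : ∀ t ω, y t ω = 0 ∨ y t ω = 1)
    (hy_cond : ∀ t : ℕ, 1 ≤ t → P[y t | 𝒢 (t - 1)] =ᵐ[P] r t) :
    ∀ t : ℕ, 1 ≤ t →
      P[(fun ω => (∑ k ∈ Finset.Icc 1 K, w k * S (p t k ω) (y t ω))
            - ∑ k ∈ Finset.Icc 1 K, w k * S (q t k ω) (y t ω)) | 𝒢 (t - 1)]
        =ᵐ[P] (fun ω => (∑ k ∈ Finset.Icc 1 K, w k * S (p t k ω) (r t ω))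
            - ∑ k ∈ Finset.Icc 1 K, w k * S (q t k ω) (r t ω)) :=
  kstep_score_differential_conditionally_unbiased_general 𝒢 S hSmeas hSbdd hlin K w p q r y hp_pred
    hq_pred hp_mem hq_mem hr_mem hy_adapted hy_mem hy_cond
end

section
/- (Bounds on the Winkler score for the Brier score.) Let S be the Brier score S(p,r) = −(p−r)², and let q₀ ∈ (0, 1/2]. Then for all p, r ∈ [0,1] and all q ∈ [q₀, 1−q₀], the Winkler score satisfies 1 − 2/q₀ ≤ w(p,q,r) ≤ 1. -/
open Set

/-- The Brier (quadratic) score `S(p,r) = −(p−r)²`. -/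
def brier (p r : ℝ) : ℝ := -(p - r) ^ 2

/-- The Winkler normalizer `T(p,q) := S(p, 1{p ≥ q}) − S(q, 1{p ≥ q})`. -/
noncomputable def winklerNormalizer (S : ℝ → ℝ → ℝ) (p q : ℝ) : ℝ :=
  S p (if q ≤ p then 1 else 0) - S q (if q ≤ p then 1 else 0)

/-- The Winkler score `w(p,q,r) := (S(p,r) − S(q,r)) / T(p,q)`, with the convention
`0/0 := 0` (which is Lean's division-by-zero convention). -/
noncomputable def winklerScore (S : ℝ → ℝ → ℝ) (p q r : ℝ) : ℝ :=
  (S p r - S q r) / winklerNormalizer S p q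

/-!
For the Brier score both the numerator and the normalizer of the Winkler score carry the
factor `q - p`, so for `p < q` the score is `(p + q - 2r) / (p + q)`, which lies between
`1 - 2 / (p + q) ≥ 1 - 2 / q₀` and `1`. The case `p > q` reduces to this one under the
reflection `x ↦ 1 - x` of all three arguments, which preserves the Brier score and swaps the
outcome `1{p ≥ q}` between `1` and `0`; for `p = q` the score is `0`.
-/

theorem winklerScore_self (S : ℝ → ℝ → ℝ) (p r : ℝ) : winklerScore S p p r = 0 := by
  simp [winklerScore]

theorem winklerScore_brier_of_lt {p q : ℝ} (r : ℝ) (hpq : p < q) :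
    winklerScore brier p q r = (p + q - 2 * r) / (p + q) := by
  have hqp : q - p ≠ 0 := sub_ne_zero.2 hpq.ne'
  rw [winklerScore, winklerNormalizer, if_neg hpq.not_ge,
    ← mul_div_mul_left (p + q - 2 * r) (p + q) hqp]
  congr 1 <;> simp only [brier] <;> ring

theorem winklerScore_brier_eq_one_sub_of_lt {p q : ℝ} (r : ℝ) (hqp : q < p) :
    winklerScore brier p q r = winklerScore brier (1 - p) (1 - q) (1 - r) := by
  have hreflect : ¬ 1 - q ≤ 1 - p := by linarith
  simp only [winklerScore, winklerNormalizer, if_pos hqp.le, if_neg hreflect, brier]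
  ring_nf

theorem winklerScore_brier_mem_Icc_of_lt {q₀ p q r : ℝ} (hq₀ : 0 < q₀) (hp : 0 ≤ p)
    (hr : r ∈ Icc (0 : ℝ) 1) (hq : q₀ ≤ q) (hpq : p < q) :
    winklerScore brier p q r ∈ Icc (1 - 2 / q₀) 1 := by
  have hs : 0 < p + q := by linarith
  rw [winklerScore_brier_of_lt r hpq]
  constructor
  · calc 1 - 2 / q₀ ≤ 1 - 2 / (p + q) := by gcongr; linarith
      _ = (p + q - 2) / (p + q) := by field_simp
      _ ≤ (p + q - 2 * r) / (p + q) := by gcongr; linarith [hr.2]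
  · rw [div_le_one hs]
    linarith [hr.1]

/-- **Bounds on the Winkler score for the Brier score.**
Let `S` be the Brier score `S(p,r) = −(p−r)²`, and let `q₀ ∈ (0, 1/2]`.  Then for all
`p, r ∈ [0,1]` and all `q ∈ [q₀, 1−q₀]`, the Winkler score satisfies
`1 − 2/q₀ ≤ w(p,q,r) ≤ 1`. -/
theorem winkler_score_brier_bounds
    (q₀ : ℝ) (hq₀ : q₀ ∈ Ioc (0:ℝ) (1 / 2))
    (p r q : ℝ) (hp : p ∈ Icc (0:ℝ) 1) (hr : r ∈ Icc (0:ℝ) 1)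
    (hq : q ∈ Icc q₀ (1 - q₀)) :
    1 - 2 / q₀ ≤ winklerScore brier p q r ∧ winklerScore brier p q r ≤ 1 := by
  obtain ⟨hq₀pos, hq₀half⟩ := hq₀
  rcases lt_trichotomy p q with hpq | rfl | hqp
  · exact winklerScore_brier_mem_Icc_of_lt hq₀pos hp.1 hr hq.1 hpq
  · rw [winklerScore_self]
    have : 1 ≤ 2 / q₀ := by rw [le_div_iff₀ hq₀pos]; linarith
    constructor <;> linarith
  · rw [winklerScore_brier_eq_one_sub_of_lt r hqp]
    refine winklerScore_brier_mem_Icc_of_lt hq₀pos (by linarith [hp.2]) ⟨?_, ?_⟩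
      (by linarith [hq.2]) (by linarith) <;> linarith [hr.1, hr.2]
end

section
/- (Closed form of the gamma-exponential mixture, case z > 0.) Let ρ > 0, v ≥ 0, and s ∈ ℝ with z := s + v + ρ > 0, and set a := v + ρ and C(ρ) := ρ^ρ / ∫₀^ρ u^{ρ−1} e^{−u} du. Then ∫₀¹ exp( λ s + (log(1−λ) + λ) v ) · C(ρ) (1−λ)^{ρ−1} e^{−ρ(1−λ)} dλ = C(ρ) · e^{s+v} · z^{−a} · ∫₀^z u^{a−1} e^{−u} du. -/
open Set MeasureTheory

/-- **Closed form of the gamma-exponential mixture, case `z > 0`.**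
Let `ρ > 0`, `v ≥ 0`, and `s ∈ ℝ` with `z := s + v + ρ > 0`, and set `a := v + ρ` and
`C(ρ) := ρ^ρ / ∫₀^ρ u^{ρ−1} e^{−u} du`.  Then
`∫₀¹ exp(λs + (log(1−λ)+λ)v) · C(ρ)(1−λ)^{ρ−1} e^{−ρ(1−λ)} dλ
  = C(ρ) · e^{s+v} · z^{−a} · ∫₀^z u^{a−1} e^{−u} du`. -/
theorem gamma_exponential_mixture_closed_form
    (ρ v s C a z : ℝ)
    (hρ : 0 < ρ) (hv : 0 ≤ v)
    (hz : z = s + v + ρ) (hz_pos : 0 < z)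
    (ha : a = v + ρ)
    (hC : C = ρ ^ ρ / ∫ u in Ioo (0:ℝ) ρ, u ^ (ρ - 1) * Real.exp (-u)) :
    (∫ l in Ioo (0:ℝ) 1,
        Real.exp (l * s + (Real.log (1 - l) + l) * v) *
          (C * (1 - l) ^ (ρ - 1) * Real.exp (-(ρ * (1 - l)))))
      = C * Real.exp (s + v) * z ^ (-a) *
          ∫ u in Ioo (0:ℝ) z, u ^ (a - 1) * Real.exp (-u) := by
  set g : ℝ → ℝ := fun u => u ^ (a - 1) * Real.exp (-u) with hg
  have hpt : ∀ l ∈ Ioo (0:ℝ) 1,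
      Real.exp (l * s + (Real.log (1 - l) + l) * v) *
        (C * (1 - l) ^ (ρ - 1) * Real.exp (-(ρ * (1 - l))))
      = C * Real.exp (s + v) * z ^ (-a) * (z * g (z * (1 - l))) := by
    intro l hl
    have h1l : 0 < 1 - l := by linarith [hl.2]
    have hzl : (z * (1 - l)) ^ (a - 1) = z ^ (a - 1) * (1 - l) ^ (a - 1) :=
      Real.mul_rpow hz_pos.le h1l.le
    have hcancel : z ^ (-a) * (z * z ^ (a - 1)) = 1 := by
      rw [show z * z ^ (a-1) = z ^ (1:ℝ) * z ^ (a-1) by rw [Real.rpow_one],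
        ← Real.rpow_add hz_pos, ← Real.rpow_add hz_pos]
      norm_num
    have h1la : (1 - l) ^ (a - 1)
        = Real.exp (Real.log (1 - l) * v) * (1 - l) ^ (ρ - 1) := by
      rw [ha, show v + ρ - 1 = v + (ρ - 1) by ring, Real.rpow_add h1l,
        Real.rpow_def_of_pos h1l]
    simp only [hg]
    rw [hzl, h1la]
    have hexp : Real.exp (l * s + (Real.log (1 - l) + l) * v) * Real.exp (-(ρ * (1 - l)))
        = Real.exp (s + v) * Real.exp (Real.log (1 - l) * v) * Real.exp (-(z * (1 - l))) := by
      rw [← Real.exp_add, ← Real.exp_add, ← Real.exp_add]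
      congr 1
      rw [hz]; ring
    calc Real.exp (l * s + (Real.log (1 - l) + l) * v) *
          (C * (1 - l) ^ (ρ - 1) * Real.exp (-(ρ * (1 - l))))
        = C * (1 - l) ^ (ρ - 1) *
            (Real.exp (l * s + (Real.log (1 - l) + l) * v) * Real.exp (-(ρ * (1 - l)))) := by
          ring
      _ = C * (1 - l) ^ (ρ - 1) *
            (Real.exp (s + v) * Real.exp (Real.log (1 - l) * v) * Real.exp (-(z * (1 - l)))) := by
          rw [hexp]
      _ = (z ^ (-a) * (z * z ^ (a - 1))) * (C * Real.exp (s + v) *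
            (Real.exp (Real.log (1 - l) * v) * (1 - l) ^ (ρ - 1) * Real.exp (-(z * (1 - l))))) := by
          rw [hcancel]; ring
      _ = C * Real.exp (s + v) * z ^ (-a) *
            (z * (z ^ (a - 1) * (Real.exp (Real.log (1 - l) * v) * (1 - l) ^ (ρ - 1)) *
              Real.exp (-(z * (1 - l))))) := by ring
  rw [setIntegral_congr_fun measurableSet_Ioo hpt]
  rw [integral_const_mul]
  congr 1
  have hchg : (∫ l in Ioo (0:ℝ) 1, z * g (z * (1 - l))) = ∫ u in Ioo (0:ℝ) z, g u := by
    rw [← integral_Ioc_eq_integral_Ioo, ← integral_Ioc_eq_integral_Ioo,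
      ← intervalIntegral.integral_of_le (by norm_num : (0:ℝ) ≤ 1),
      ← intervalIntegral.integral_of_le hz_pos.le]
    rw [intervalIntegral.integral_const_mul]
    have h1 : (∫ l in (0:ℝ)..1, g (z * (1 - l))) = ∫ t in (0:ℝ)..1, g (z * t) := by
      have := intervalIntegral.integral_comp_sub_left (a := 0) (b := 1)
        (fun t => g (z * t)) 1
      simpa using this
    rw [h1, intervalIntegral.integral_comp_mul_left g hz_pos.ne']
    rw [smul_eq_mul, mul_zero, mul_one, ← mul_assoc, mul_inv_cancel₀ hz_pos.ne', one_mul]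
  rw [hchg]
end

section
/- (Bound on the gamma-exponential mixture, case z < 0.) Let ρ > 0, v > 0, and s ∈ ℝ with s + v + ρ < 0, and set C(ρ) := ρ^ρ / ∫₀^ρ u^{ρ−1} e^{−u} du. Then m(s,v) := ∫₀¹ exp( λ s + (log(1−λ) + λ) v ) · C(ρ) (1−λ)^{ρ−1} e^{−ρ(1−λ)} dλ satisfies m(s,v) ≤ C(ρ) e^{−ρ} / (v + ρ) ≤ 1. -/
open Set MeasureTheory

lemma aux_one_sub_rpow_intInt {q : ℝ} (hq : 0 < q) :
    IntervalIntegrable (fun l : ℝ => (1 - l) ^ (q - 1)) volume 0 1 := by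
  have h := (intervalIntegral.intervalIntegrable_rpow'
      (a := 1) (b := 0) (by linarith : (-1:ℝ) < q - 1)).comp_sub_left 1
  simpa using h

lemma aux_one_sub_rpow_integrable {q : ℝ} (hq : 0 < q) :
    IntegrableOn (fun l : ℝ => (1 - l) ^ (q - 1)) (Ioo (0:ℝ) 1) := by
  have h := aux_one_sub_rpow_intInt hq
  rw [intervalIntegrable_iff_integrableOn_Ioo_of_le (by norm_num)] at h
  exact h

lemma aux_one_sub_rpow_integral {q : ℝ} (hq : 0 < q) :
    ∫ l in Ioo (0:ℝ) 1, (1 - l) ^ (q - 1) = 1 / q := by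
  rw [← integral_Ioc_eq_integral_Ioo,
    ← intervalIntegral.integral_of_le (by norm_num : (0:ℝ) ≤ 1)]
  rw [intervalIntegral.integral_comp_sub_left (fun x : ℝ => x ^ (q - 1)) 1]
  simp only [sub_self, sub_zero]
  rw [integral_rpow (Or.inl (by linarith : (-1:ℝ) < q - 1))]
  rw [sub_add_cancel, Real.one_rpow, Real.zero_rpow (by linarith : q ≠ 0)]
  norm_num

lemma aux_rpow_integral {ρ : ℝ} (hρ : 0 < ρ) :
    ∫ u in Ioo (0:ℝ) ρ, u ^ (ρ - 1) = ρ ^ ρ / ρ := by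
  rw [← integral_Ioc_eq_integral_Ioo,
    ← intervalIntegral.integral_of_le hρ.le]
  rw [integral_rpow (Or.inl (by linarith : (-1:ℝ) < ρ - 1))]
  rw [sub_add_cancel, Real.zero_rpow hρ.ne']
  ring

lemma aux_rpow_integrable {ρ : ℝ} (hρ : 0 < ρ) :
    IntegrableOn (fun u : ℝ => u ^ (ρ - 1)) (Ioo (0:ℝ) ρ) := by
  have h := intervalIntegral.intervalIntegrable_rpow'
      (a := 0) (b := ρ) (by linarith : (-1:ℝ) < ρ - 1)
  rw [intervalIntegrable_iff_integrableOn_Ioo_of_le hρ.le] at h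
  exact h

lemma aux_gamma_integrable {ρ : ℝ} (hρ : 0 < ρ) :
    IntegrableOn (fun u : ℝ => u ^ (ρ - 1) * Real.exp (-u)) (Ioo (0:ℝ) ρ) := by
  refine (aux_rpow_integrable hρ).mono' ?_ ?_
  · exact (aux_rpow_integrable hρ).aestronglyMeasurable.mul
      ((Real.continuous_exp.comp continuous_neg).aestronglyMeasurable.restrict)
  · filter_upwards [ae_restrict_mem measurableSet_Ioo] with u hu
    have hu0 : 0 < u := hu.1
    have h1 : (0:ℝ) ≤ u ^ (ρ - 1) := Real.rpow_nonneg hu0.le _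
    have h2 : Real.exp (-u) ≤ 1 := Real.exp_le_one_iff.2 (by linarith)
    rw [Real.norm_eq_abs, abs_of_nonneg (mul_nonneg h1 (Real.exp_pos _).le)]
    nlinarith [Real.exp_pos (-u)]

lemma aux_gamma_lb {ρ : ℝ} (hρ : 0 < ρ) :
    Real.exp (-ρ) * (ρ ^ ρ / ρ) ≤ ∫ u in Ioo (0:ℝ) ρ, u ^ (ρ - 1) * Real.exp (-u) := by
  have h := integral_mono_of_nonneg (μ := volume.restrict (Ioo (0:ℝ) ρ))
      (f := fun u : ℝ => Real.exp (-ρ) * u ^ (ρ - 1))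
      (g := fun u : ℝ => u ^ (ρ - 1) * Real.exp (-u)) ?_ (aux_gamma_integrable hρ) ?_
  · calc Real.exp (-ρ) * (ρ ^ ρ / ρ)
        = ∫ u in Ioo (0:ℝ) ρ, Real.exp (-ρ) * u ^ (ρ - 1) := by
          rw [integral_const_mul, aux_rpow_integral hρ]
      _ ≤ _ := h
  · filter_upwards [ae_restrict_mem measurableSet_Ioo] with u hu
    exact mul_nonneg (Real.exp_pos _).le (Real.rpow_nonneg hu.1.le _)
  · filter_upwards [ae_restrict_mem measurableSet_Ioo] with u hu
    have h1 : (0:ℝ) ≤ u ^ (ρ - 1) := Real.rpow_nonneg hu.1.le _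
    have h2 : Real.exp (-ρ) ≤ Real.exp (-u) := Real.exp_le_exp.2 (by linarith [hu.2])
    nlinarith

/-- **Bound on the gamma-exponential mixture, case `z < 0`.**
Let `ρ > 0`, `v > 0`, and `s ∈ ℝ` with `s + v + ρ < 0`, and set
`C(ρ) := ρ^ρ / ∫₀^ρ u^{ρ−1} e^{−u} du`.  Then
`m(s,v) := ∫₀¹ exp(λs + (log(1−λ)+λ)v) · C(ρ)(1−λ)^{ρ−1} e^{−ρ(1−λ)} dλ` satisfies
`m(s,v) ≤ C(ρ) e^{−ρ} / (v + ρ) ≤ 1`. -/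
theorem gamma_exponential_mixture_bound_neg
    (ρ v s C : ℝ)
    (hρ : 0 < ρ) (hv : 0 < v)
    (hz_neg : s + v + ρ < 0)
    (hC : C = ρ ^ ρ / ∫ u in Ioo (0:ℝ) ρ, u ^ (ρ - 1) * Real.exp (-u)) :
    (∫ l in Ioo (0:ℝ) 1,
        Real.exp (l * s + (Real.log (1 - l) + l) * v) *
          (C * (1 - l) ^ (ρ - 1) * Real.exp (-(ρ * (1 - l)))))
      ≤ C * Real.exp (-ρ) / (v + ρ) ∧
    C * Real.exp (-ρ) / (v + ρ) ≤ 1 := by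
  set I := ∫ u in Ioo (0:ℝ) ρ, u ^ (ρ - 1) * Real.exp (-u) with hI
  have hρρ : (0:ℝ) < ρ ^ ρ := Real.rpow_pos_of_pos hρ _
  have hIlb : Real.exp (-ρ) * (ρ ^ ρ / ρ) ≤ I := aux_gamma_lb hρ
  have hIpos : 0 < I := lt_of_lt_of_le (by positivity) hIlb
  have hCpos : 0 < C := hC ▸ div_pos hρρ hIpos
  have hCub : C * Real.exp (-ρ) ≤ ρ := by
    rw [hC]
    have h1 : ρ ^ ρ / I ≤ ρ ^ ρ / (Real.exp (-ρ) * (ρ ^ ρ / ρ)) :=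
      div_le_div_of_nonneg_left hρρ.le (by positivity) hIlb
    have h2 : ρ ^ ρ / (Real.exp (-ρ) * (ρ ^ ρ / ρ)) * Real.exp (-ρ) = ρ := by
      field_simp
    calc ρ ^ ρ / I * Real.exp (-ρ)
        ≤ ρ ^ ρ / (Real.exp (-ρ) * (ρ ^ ρ / ρ)) * Real.exp (-ρ) :=
          mul_le_mul_of_nonneg_right h1 (Real.exp_pos _).le
      _ = ρ := h2
  have hvρ : (0:ℝ) < v + ρ := by linarith
  constructor
  · have hq : (0:ℝ) < v + ρ := hvρ
    have key : ∀ l ∈ Ioo (0:ℝ) 1,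
        Real.exp (l * s + (Real.log (1 - l) + l) * v) *
          (C * (1 - l) ^ (ρ - 1) * Real.exp (-(ρ * (1 - l))))
        = C * Real.exp (-ρ) * ((1 - l) ^ (v + ρ - 1) * Real.exp (l * (s + v + ρ))) := by
      intro l hl
      have h1 : (0:ℝ) < 1 - l := by linarith [hl.2]
      have h2 : (1 - l) ^ (v + ρ - 1)
          = Real.exp (Real.log (1 - l) * v) * (1 - l) ^ (ρ - 1) := by
        rw [show v + ρ - 1 = v + (ρ - 1) by ring, Real.rpow_add h1,
          Real.rpow_def_of_pos h1]
      rw [h2]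
      have h3 : Real.exp (l * s + (Real.log (1 - l) + l) * v) * Real.exp (-(ρ * (1 - l)))
          = Real.exp (Real.log (1 - l) * v) * Real.exp (-ρ) * Real.exp (l * (s + v + ρ)) := by
        rw [← Real.exp_add, ← Real.exp_add, ← Real.exp_add]
        congr 1
        ring
      calc Real.exp (l * s + (Real.log (1 - l) + l) * v) *
            (C * (1 - l) ^ (ρ - 1) * Real.exp (-(ρ * (1 - l))))
          = Real.exp (l * s + (Real.log (1 - l) + l) * v) * Real.exp (-(ρ * (1 - l))) *
            (C * (1 - l) ^ (ρ - 1)) := by ring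
        _ = Real.exp (Real.log (1 - l) * v) * Real.exp (-ρ) * Real.exp (l * (s + v + ρ)) *
            (C * (1 - l) ^ (ρ - 1)) := by rw [h3]
        _ = _ := by ring
    have hg_int : Integrable (fun l : ℝ => C * Real.exp (-ρ) * (1 - l) ^ (v + ρ - 1))
        (volume.restrict (Ioo (0:ℝ) 1)) :=
      (aux_one_sub_rpow_integrable hq).const_mul _
    have hmono := integral_mono_of_nonneg (μ := volume.restrict (Ioo (0:ℝ) 1))
        (f := fun l : ℝ => Real.exp (l * s + (Real.log (1 - l) + l) * v) *
          (C * (1 - l) ^ (ρ - 1) * Real.exp (-(ρ * (1 - l)))))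
        (g := fun l : ℝ => C * Real.exp (-ρ) * (1 - l) ^ (v + ρ - 1)) ?_ hg_int ?_
    · calc (∫ l in Ioo (0:ℝ) 1,
            Real.exp (l * s + (Real.log (1 - l) + l) * v) *
              (C * (1 - l) ^ (ρ - 1) * Real.exp (-(ρ * (1 - l)))))
          ≤ ∫ l in Ioo (0:ℝ) 1, C * Real.exp (-ρ) * (1 - l) ^ (v + ρ - 1) := hmono
        _ = C * Real.exp (-ρ) * (1 / (v + ρ)) := by
            rw [integral_const_mul, aux_one_sub_rpow_integral hq]
        _ = C * Real.exp (-ρ) / (v + ρ) := by ring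
    · filter_upwards [ae_restrict_mem measurableSet_Ioo] with l hl
      have h1 : (0:ℝ) < 1 - l := by linarith [hl.2]
      have := Real.rpow_nonneg h1.le (ρ - 1)
      positivity
    · filter_upwards [ae_restrict_mem measurableSet_Ioo] with l hl
      rw [key l hl]
      have h1 : (0:ℝ) < 1 - l := by linarith [hl.2]
      have h2 : Real.exp (l * (s + v + ρ)) ≤ 1 :=
        Real.exp_le_one_iff.2 (by nlinarith [hl.1])
      have h3 : (0:ℝ) ≤ (1 - l) ^ (v + ρ - 1) := Real.rpow_nonneg h1.le _
      exact mul_le_mul_of_nonneg_left (mul_le_of_le_one_right h3 h2)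
        (mul_pos hCpos (Real.exp_pos (-ρ))).le
  · rw [div_le_one hvρ]
    linarith
end

section
/- (Lemma 1 for categorical outcomes.) If the scoring rule S has a linear equivalent, then for every t ≥ 1, E[δ̂_t | 𝒢_{t−1}] = δ_t almost surely, where δ_t = S(𝐩_t, 𝐫_t) − S(𝐪_t, 𝐫_t) and δ̂_t = S(𝐩_t, 𝐲_t) − S(𝐪_t, 𝐲_t). -/
/-!
Subtracting the linear equivalent `S̃` from `S` leaves a term independent of the forecast, so
`S(𝐩, 𝐳) − S(𝐪, 𝐳) = S̃(𝐩, 𝐳) − S̃(𝐪, 𝐳)` on the simplex. Being affine, `S̃(𝐩, ·)` is determined by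
its values at the vertices, so the score differential is `∑ⱼ cⱼ zⱼ` with coefficients
`cⱼ = S̃(𝐩, eⱼ) − S̃(𝐪, eⱼ)`. For `𝐩 = 𝐩_t`, `𝐪 = 𝐪_t` these coefficients are bounded and
`𝒢_{t−1}`-measurable, so they pull out of the conditional expectation, and `E[𝐲_t | 𝒢_{t−1}] = 𝐫_t`.
-/

open MeasureTheory Set

/-- A scoring rule `S` on the probability simplex `Δ^{K−1} × Δ^{K−1}` *has a linear
equivalent* if there is a bounded measurable `S̃` which is (the restriction of) an affine
map in its second argument and such that `S(𝐩,𝐫) − S̃(𝐩,𝐫)` does not depend on `𝐩`. -/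
def HasLinearEquivalentCat {K : ℕ} (S : (Fin K → ℝ) → (Fin K → ℝ) → ℝ) : Prop :=
  ∃ St : (Fin K → ℝ) → (Fin K → ℝ) → ℝ,
    Measurable (Function.uncurry St) ∧
    (∃ C : ℝ, ∀ p ∈ stdSimplex ℝ (Fin K), ∀ r ∈ stdSimplex ℝ (Fin K), |St p r| ≤ C) ∧
    (∀ p ∈ stdSimplex ℝ (Fin K), ∃ (a : ℝ) (b : Fin K → ℝ),
      ∀ r ∈ stdSimplex ℝ (Fin K), St p r = a + ∑ j, b j * r j) ∧
    (∀ p ∈ stdSimplex ℝ (Fin K), ∀ p' ∈ stdSimplex ℝ (Fin K), ∀ r ∈ stdSimplex ℝ (Fin K),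
      S p r - St p r = S p' r - St p' r)

theorem eq_sum_apply_single_mul_of_eq_affine_on_stdSimplex {ι : Type*} [Fintype ι]
    [DecidableEq ι] {f : (ι → ℝ) → ℝ} {a : ℝ} {b : ι → ℝ}
    (hf : ∀ z ∈ stdSimplex ℝ ι, f z = a + ∑ j, b j * z j) {z : ι → ℝ}
    (hz : z ∈ stdSimplex ℝ ι) :
    f z = ∑ j, f (Pi.single j 1) * z j := by
  have hvertex : ∀ j, f (Pi.single j 1) = a + b j := fun j => by
    simp [hf _ (single_mem_stdSimplex ℝ j), Pi.single_apply]
  calc f z = a * ∑ j, z j + ∑ j, b j * z j := by rw [hf z hz, hz.2, mul_one]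
    _ = ∑ j, f (Pi.single j 1) * z j := by
      simp only [hvertex, add_mul, Finset.sum_add_distrib, Finset.mul_sum]

theorem HasLinearEquivalentCat.exists_sub_eq_sum_mul {K : ℕ}
    {S : (Fin K → ℝ) → (Fin K → ℝ) → ℝ} (hS : HasLinearEquivalentCat S) :
    ∃ a : (Fin K → ℝ) → Fin K → ℝ, (∀ j, Measurable fun p => a p j) ∧
      (∃ C, ∀ p ∈ stdSimplex ℝ (Fin K), ∀ j, |a p j| ≤ C) ∧
      ∀ p ∈ stdSimplex ℝ (Fin K), ∀ q ∈ stdSimplex ℝ (Fin K), ∀ z ∈ stdSimplex ℝ (Fin K),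
        S p z - S q z = ∑ j, (a p j - a q j) * z j := by
  obtain ⟨St, hSt_meas, ⟨C, hSt_bdd⟩, hSt_affine, hS_sub_St⟩ := hS
  refine ⟨fun p j => St p (Pi.single j 1),
    fun j => hSt_meas.comp (measurable_id.prodMk measurable_const),
    ⟨C, fun p hp j => hSt_bdd p hp _ (single_mem_stdSimplex ℝ j)⟩,
    fun p hp q hq z hz => ?_⟩
  obtain ⟨ap, bp, hp_affine⟩ := hSt_affine p hp
  obtain ⟨aq, bq, hq_affine⟩ := hSt_affine q hq
  calc S p z - S q z = St p z - St q z := by linarith [hS_sub_St p hp q hq z hz]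
    _ = _ := by
      rw [eq_sum_apply_single_mul_of_eq_affine_on_stdSimplex hp_affine hz,
        eq_sum_apply_single_mul_of_eq_affine_on_stdSimplex hq_affine hz,
        ← Finset.sum_sub_distrib]
      simp only [sub_mul]

theorem condExp_sum_mul_ae_eq_of_condExp_ae_eq {ι Ω : Type*} [Fintype ι]
    {m m0 : MeasurableSpace Ω} {μ : Measure Ω} [IsFiniteMeasure μ] (hm : m ≤ m0)
    {c Y R : ι → Ω → ℝ} (hc : ∀ j, StronglyMeasurable[m] (c j))
    (hc_bdd : ∃ C, ∀ j ω, |c j ω| ≤ C) (hY : ∀ j, Integrable (Y j) μ)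
    (hYR : ∀ j, μ[Y j | m] =ᵐ[μ] R j) :
    μ[fun ω => ∑ j, c j ω * Y j ω | m] =ᵐ[μ] fun ω => ∑ j, c j ω * R j ω := by
  obtain ⟨C, hC⟩ := hc_bdd
  have hsum : (fun ω => ∑ j, c j ω * Y j ω) = ∑ j, c j * Y j := by
    ext ω
    simp only [Finset.sum_apply, Pi.mul_apply]
  have hint : ∀ j ∈ Finset.univ, Integrable (c j * Y j) μ := fun j _ =>
    (hY j).bdd_mul ((hc j).mono hm).aestronglyMeasurable (ae_of_all _ (hC j))
  have hpull : ∀ᵐ ω ∂μ, ∀ j, μ[c j * Y j | m] ω = c j ω * R j ω := by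
    refine ae_all_iff.2 fun j => ?_
    exact (condExp_stronglyMeasurable_mul_of_bound hm (hc j) (hY j) C
      (ae_of_all _ (hC j))).trans (Filter.EventuallyEq.rfl.mul (hYR j))
  rw [hsum]
  filter_upwards [condExp_finsetSum hint m, hpull] with ω hsum_ω hpull_ω
  rw [hsum_ω, Finset.sum_apply]
  exact Finset.sum_congr rfl fun j _ => hpull_ω j

theorem categorical_score_differential_conditionally_unbiased_general
    {Ω : Type*} {m0 : MeasurableSpace Ω} {P : Measure Ω} [IsProbabilityMeasure P]
    (𝒢 : Filtration ℕ m0)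
    (K : ℕ)
    (S : (Fin K → ℝ) → (Fin K → ℝ) → ℝ)
    (hlin : HasLinearEquivalentCat S)
    (p q r y : ℕ → Ω → (Fin K → ℝ))
    (hp_pred : ∀ t : ℕ, 1 ≤ t → Measurable[𝒢 (t - 1)] (p t))
    (hq_pred : ∀ t : ℕ, 1 ≤ t → Measurable[𝒢 (t - 1)] (q t))
    (hp_mem : ∀ t ω, p t ω ∈ stdSimplex ℝ (Fin K))
    (hq_mem : ∀ t ω, q t ω ∈ stdSimplex ℝ (Fin K))
    (hr_mem : ∀ t ω, r t ω ∈ stdSimplex ℝ (Fin K))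
    (hy_adapted : ∀ t : ℕ, 1 ≤ t → Measurable[𝒢 t] (y t))
    (hy_onehot : ∀ t ω, ∃ k : Fin K, y t ω = fun j => if j = k then 1 else 0)
    (hy_cond : ∀ t : ℕ, 1 ≤ t → ∀ j : Fin K,
      P[(fun ω => y t ω j) | 𝒢 (t - 1)] =ᵐ[P] (fun ω => r t ω j)) :
    ∀ t : ℕ, 1 ≤ t →
      P[(fun ω => S (p t ω) (y t ω) - S (q t ω) (y t ω)) | 𝒢 (t - 1)]
        =ᵐ[P] (fun ω => S (p t ω) (r t ω) - S (q t ω) (r t ω)) := by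
  obtain ⟨a, ha_meas, ⟨C, ha_bdd⟩, hS_sub⟩ := hlin.exists_sub_eq_sum_mul
  intro t ht
  have hy_mem : ∀ ω, y t ω ∈ stdSimplex ℝ (Fin K) := fun ω => by
    obtain ⟨k, hk⟩ := hy_onehot t ω
    simpa only [hk, ← Pi.single_apply] using single_mem_stdSimplex ℝ k
  have hy_int : ∀ j, Integrable (fun ω => y t ω j) P := fun j =>
    Integrable.of_mem_Icc 0 1
      (((measurable_pi_apply j).comp ((hy_adapted t ht).mono (𝒢.le t) le_rfl)).aemeasurable)
      (ae_of_all _ fun ω => mem_Icc_of_mem_stdSimplex (hy_mem ω) j)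
  have hc_meas : ∀ j, StronglyMeasurable[𝒢 (t - 1)] fun ω => a (p t ω) j - a (q t ω) j :=
    fun j => (((ha_meas j).comp (hp_pred t ht)).sub
      ((ha_meas j).comp (hq_pred t ht))).stronglyMeasurable
  have hc_bdd : ∃ C', ∀ j ω, |a (p t ω) j - a (q t ω) j| ≤ C' :=
    ⟨C + C, fun j ω => (abs_sub _ _).trans
      (add_le_add (ha_bdd _ (hp_mem t ω) j) (ha_bdd _ (hq_mem t ω) j))⟩
  simp only [hS_sub _ (hp_mem t _) _ (hq_mem t _) _ (hy_mem _),
    hS_sub _ (hp_mem t _) _ (hq_mem t _) _ (hr_mem t _)]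
  exact condExp_sum_mul_ae_eq_of_condExp_ae_eq (𝒢.le (t - 1)) hc_meas hc_bdd hy_int (hy_cond t ht)

/-- **Lemma 1 for categorical outcomes.**
If the scoring rule `S` has a linear equivalent, then for every `t ≥ 1`,
`E[δ̂_t | 𝒢_{t−1}] = δ_t` almost surely, where `δ_t = S(𝐩_t, 𝐫_t) − S(𝐪_t, 𝐫_t)` and
`δ̂_t = S(𝐩_t, 𝐲_t) − S(𝐪_t, 𝐲_t)`, the outcomes `𝐲_t` being one-hot vectors with
conditional mean `𝐫_t`. -/
theorem categorical_score_differential_conditionally_unbiased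
    {Ω : Type*} {m0 : MeasurableSpace Ω} {P : Measure Ω} [IsProbabilityMeasure P]
    (𝒢 : Filtration ℕ m0)
    (K : ℕ) (hK : 2 ≤ K)
    (S : (Fin K → ℝ) → (Fin K → ℝ) → ℝ)
    (hSmeas : Measurable (Function.uncurry S))
    (hSbdd : ∃ C : ℝ, ∀ p ∈ stdSimplex ℝ (Fin K), ∀ r ∈ stdSimplex ℝ (Fin K), |S p r| ≤ C)
    (hlin : HasLinearEquivalentCat S)
    (p q r y : ℕ → Ω → (Fin K → ℝ))
    (hp_pred : ∀ t : ℕ, 1 ≤ t → Measurable[𝒢 (t - 1)] (p t))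
    (hq_pred : ∀ t : ℕ, 1 ≤ t → Measurable[𝒢 (t - 1)] (q t))
    (hr_pred : ∀ t : ℕ, 1 ≤ t → Measurable[𝒢 (t - 1)] (r t))
    (hp_mem : ∀ t ω, p t ω ∈ stdSimplex ℝ (Fin K))
    (hq_mem : ∀ t ω, q t ω ∈ stdSimplex ℝ (Fin K))
    (hr_mem : ∀ t ω, r t ω ∈ stdSimplex ℝ (Fin K))
    (hy_adapted : ∀ t : ℕ, 1 ≤ t → Measurable[𝒢 t] (y t))
    (hy_onehot : ∀ t ω, ∃ k : Fin K, y t ω = fun j => if j = k then 1 else 0)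
    (hy_cond : ∀ t : ℕ, 1 ≤ t → ∀ j : Fin K,
      P[(fun ω => y t ω j) | 𝒢 (t - 1)] =ᵐ[P] (fun ω => r t ω j)) :
    ∀ t : ℕ, 1 ≤ t →
      P[(fun ω => S (p t ω) (y t ω) - S (q t ω) (y t ω)) | 𝒢 (t - 1)]
        =ᵐ[P] (fun ω => S (p t ω) (r t ω) - S (q t ω) (r t ω)) :=
  categorical_score_differential_conditionally_unbiased_general 𝒢 K S hlin p q r y hp_pred hq_pred
    hp_mem hq_mem hr_mem hy_adapted hy_onehot hy_cond
end
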